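/- arXiv:2001.00519 — 8 statements merged into one kernel-verified Lean document; each statement's English description precedes it below -/
import Mathlib

section
/- Let 1 ≤ M ≤ N be integers and a ≤ b reals. Let φ_1,…,φ_M : ℝ → ℂ, ψ_1,…,ψ_N : ℝ → ℂ and ξ_1,…,ξ_M : ℝ → ℂ be measurable functions, and let ψ̄_{j,k} ∈ ℂ be constants for 1 ≤ j ≤ N and M+1 ≤ k ≤ N. Assume that for all 1 ≤ i ≤ M, 1 ≤ j ≤ N, 1 ≤ k ≤ M the functions φ_i·ψ_j·ξ_k and ψ_j·ξ_k are Lebesgue integrable on [a,b]. For x = (x_1,…,x_M) ∈ ℝ^M, let Φ(x) be the M×M matrix with (i,j) entry φ_i(x_j), and let Ψ(x) be the N×N matrix whose (i,j) entry equals ψ_i(x_j) for 1 ≤ j ≤ M and equals ψ̄_{i,j} for M+1 ≤ j ≤ N. Then ∫_{[a,b]^M} det Φ(x) · det Ψ(x) · Π_{k=1}^M ξ_k(x_k) dx_1⋯dx_M = T(C), where C is the N×N×N tensor with entries: c_{i,j,k} = ∫_a^b φ_i(x) ψ_j(x) ξ_k(x) dx for i ≤ M and k ≤ M; c_{i,j,k}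 = ∫_a^b ψ_j(x) ξ_k(x) dx for i > M and k ≤ M; c_{i,j,k} = 0 for k > M and i < k; and c_{i,j,k} = ψ̄_{j,k} for k > M and i ≥ k. -/
/-!
Expanding both determinants writes the integrand as a signed sum, over pairs `(ν, σ)` of
permutations, of products `∏ k, f_k (x_k)` with `f_k = φ_{ν k} ψ_{σ k} ξ_k` (times constants
coming from the columns `ψbar`), and Fubini factors the integral of each product over the cube.
In `T(C)`, every slice `k > M` of `C` vanishes strictly below the diagonal in `(i, k)`, so only
permutations `μ` with `μ k ≥ k` for all `k > M` contribute; such a `μ` fixes every `k > M`, hence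
extends a permutation `ν` of the first `M` indices, and the two expansions agree term by term.
-/

open MeasureTheory

/-- The pseudo-determinant operator on a rank-3 tensor:
`T(A) = Σ_μ Σ_σ sgn(μ) sgn(σ) Π_k a_{μ(k), σ(k), k}`. -/
noncomputable def pseudoDet {N : ℕ} (A : Fin N → Fin N → Fin N → ℂ) : ℂ :=
  ∑ μ : Equiv.Perm (Fin N), ∑ σ : Equiv.Perm (Fin N),
    ((Equiv.Perm.sign μ : ℤ) : ℂ) * ((Equiv.Perm.sign σ : ℤ) : ℂ) *
      ∏ k : Fin N, A (μ k) (σ k) k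

namespace Equiv.Perm

theorem apply_eq_self_of_isUpperSet_of_le_apply {α : Type*} [PartialOrder α] [Finite α]
    {μ : Perm α} {s : Set α} (hs : IsUpperSet s) (hμ : ∀ x ∈ s, x ≤ μ x) {x : α}
    (hx : x ∈ s) : μ x = x := by
  have hpow : ∀ n : ℕ, ∀ y ∈ s, y ≤ (μ ^ n) y := by
    intro n
    induction n with
    | zero => exact fun y _ => le_rfl
    | succ n ih =>
      intro y hy
      rw [pow_succ, mul_apply]
      exact (hμ y hy).trans (ih _ (hs (hμ y hy) hy))
  -- `μ ^ orderOf μ = 1`: following the increasing chain from `μ x` leads back to `x`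
  have hback : μ x ≤ x := by
    have := hpow (orderOf μ - 1) (μ x) (hs (hμ x hx) hx)
    rwa [← mul_apply, pow_sub_one_mul (orderOf_pos μ).ne', pow_orderOf_eq_one, one_apply]
      at this
  exact le_antisymm hback (hμ x hx)

theorem exists_extendDomain_eq {α β : Type*} {p : β → Prop} [DecidablePred p]
    (f : α ≃ Subtype p) {μ : Perm β} (hμ : ∀ b, ¬ p b → μ b = b) :
    ∃ ν : Perm α, ν.extendDomain f = μ := by
  have hp : ∀ b, p (μ b) ↔ p b := by
    intro b
    by_cases hb : p b
    · refine iff_of_true (by_contra fun h => h ?_) hb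
      rwa [μ.injective (hμ _ h)]
    · rw [hμ b hb]
  refine ⟨f.symm.permCongr (μ.subtypePerm hp), ext fun b => ?_⟩
  by_cases hb : p b
  · simp [extendDomain_apply_subtype _ _ hb, permCongr_apply]
  · rw [extendDomain_apply_not_subtype _ _ hb, hμ b hb]

end Equiv.Perm

section

open Equiv Equiv.Perm

theorem Fin.prod_univ_eq_prod_castLE_mul {R : Type*} [CommMonoid R] {M N : ℕ} (h : M ≤ N)
    (f : Fin N → R) :
    ∏ j, f j = (∏ k : Fin M, f (Fin.castLE h k)) * ∏ j : {j : Fin N // ¬ (j : ℕ) < M}, f j := by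
  rw [← Fintype.prod_subtype_mul_prod_subtype (fun j : Fin N => (j : ℕ) < M) f]
  congr 1
  exact ((Fin.castLEquiv h).prod_comp fun j => f j).symm

theorem Matrix.det_of_dite_lt {R : Type*} [CommRing R] {M N : ℕ} (hMN : M ≤ N)
    (u : Fin N → Fin M → R) (B : Fin N → Fin N → R) :
    (Matrix.of fun i j : Fin N => if h : (j : ℕ) < M then u i ⟨j, h⟩ else B i j).det
      = ∑ σ : Perm (Fin N), ((sign σ : ℤ) : R) *
          (∏ k : Fin M, u (σ (Fin.castLE hMN k)) k) *
          ∏ j : {j : Fin N // ¬ (j : ℕ) < M}, B (σ j) j := by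
  rw [Matrix.det_apply']
  refine Finset.sum_congr rfl fun σ _ => ?_
  rw [Fin.prod_univ_eq_prod_castLE_mul hMN, ← mul_assoc]
  congr 2
  · exact Fintype.prod_congr _ _ fun k => by simp
  · funext j
    simp [j.2]

theorem det_mul_det_mul_prod_eq_sum {R X : Type*} [CommRing R] {M N : ℕ} (hMN : M ≤ N)
    (φ : Fin M → X → R) (ψ : Fin N → X → R) (ξ : Fin M → X → R) (ψbar : Fin N → Fin N → R)
    (x : Fin M → X) :
    (Matrix.of fun i j : Fin M => φ i (x j)).det *
      (Matrix.of fun i j : Fin N =>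
        if h : (j : ℕ) < M then ψ i (x ⟨j, h⟩) else ψbar i j).det *
      ∏ k : Fin M, ξ k (x k)
      = ∑ p : Perm (Fin M) × Perm (Fin N),
          ((sign p.1 : ℤ) : R) * ((sign p.2 : ℤ) : R) *
            (∏ j : {j : Fin N // ¬ (j : ℕ) < M}, ψbar (p.2 j) j) *
            ∏ k : Fin M, (φ (p.1 k) (x k) * ψ (p.2 (Fin.castLE hMN k)) (x k) * ξ k (x k)) := by
  rw [Fintype.sum_prod_type, Matrix.det_apply', Matrix.det_of_dite_lt hMN (fun i k => ψ i (x k)),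
    Finset.sum_mul_sum, Finset.sum_mul]
  refine Finset.sum_congr rfl fun ν _ => ?_
  rw [Finset.sum_mul]
  refine Finset.sum_congr rfl fun σ _ => ?_
  simp only [Matrix.of_apply, Finset.prod_mul_distrib]
  ring

theorem pseudoDet_eq_sum_of_lower_triangular {M N : ℕ} (hMN : M ≤ N)
    (A : Fin N → Fin N → Fin N → ℂ) (hA : ∀ i j k : Fin N, M ≤ (k : ℕ) → i < k → A i j k = 0) :
    pseudoDet A = ∑ ν : Perm (Fin M), ∑ σ : Perm (Fin N),
      ((sign ν : ℤ) : ℂ) * ((sign σ : ℤ) : ℂ) *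
        (∏ k : Fin M, A (Fin.castLE hMN (ν k)) (σ (Fin.castLE hMN k)) (Fin.castLE hMN k)) *
        ∏ j : {j : Fin N // ¬ (j : ℕ) < M}, A j (σ j) j := by
  refine (Fintype.sum_of_injective (fun ν => ν.extendDomain (Fin.castLEquiv hMN))
    (extendDomainHom_injective _) _ _ (fun μ hμ => ?_) (fun ν => ?_)).symm
  · obtain ⟨k, hMk, hμk⟩ : ∃ k : Fin N, M ≤ (k : ℕ) ∧ μ k < k := by
      by_contra! hfix
      refine hμ (exists_extendDomain_eq _ fun k hk => ?_)
      exact apply_eq_self_of_isUpperSet_of_le_apply (s := {k : Fin N | M ≤ (k : ℕ)})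
        (fun _ _ hle h => le_trans (α := ℕ) h hle) hfix (not_lt.1 hk)
    exact Finset.sum_eq_zero fun σ _ =>
      mul_eq_zero_of_right _ (Finset.prod_eq_zero (Finset.mem_univ k) (hA _ _ _ hMk hμk))
  · refine Finset.sum_congr rfl fun σ _ => ?_
    rw [sign_extendDomain, Fin.prod_univ_eq_prod_castLE_mul hMN, mul_assoc]
    congr 3 with k
    · exact congrArg (A · _ _) (extendDomain_apply_image ν (Fin.castLEquiv hMN) k).symm
    · rw [extendDomain_apply_not_subtype ν (Fin.castLEquiv hMN) (b := k) k.2]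

end

theorem setIntegral_univ_pi_sum_mul_prod {ι κ 𝕜 E : Type*} [Fintype ι] [Fintype κ] [RCLike 𝕜]
    [MeasurableSpace E] {μ : ι → Measure E} [∀ i, SigmaFinite (μ i)] {s : ι → Set E}
    (c : κ → 𝕜) {f : κ → ι → E → 𝕜} (hf : ∀ p i, IntegrableOn (f p i) (s i) (μ i)) :
    ∫ x in Set.univ.pi s, ∑ p, c p * ∏ i, f p i (x i) ∂Measure.pi μ
      = ∑ p, c p * ∏ i, ∫ y in s i, f p i y ∂μ i := by
  rw [Measure.restrict_pi_pi, integral_finsetSum _ fun p _ =>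
    (Integrable.fintype_prod_dep (hf p)).const_mul (c p)]
  simp only [integral_const_mul, integral_fintype_prod_eq_prod]

theorem stmt_1_general {M N : ℕ} (hMN : M ≤ N) {a b : ℝ}
    (φ : Fin M → ℝ → ℂ) (ψ : Fin N → ℝ → ℂ) (ξ : Fin M → ℝ → ℂ)
    (ψbar : Fin N → Fin N → ℂ)
    (hInt1 : ∀ (i : Fin M) (j : Fin N) (k : Fin M),
      IntegrableOn (fun x => φ i x * ψ j x * ξ k x) (Set.Icc a b)) :
    (∫ x : Fin M → ℝ in Set.univ.pi fun _ : Fin M => Set.Icc a b,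
      (Matrix.of fun i j : Fin M => φ i (x j)).det *
      (Matrix.of fun i j : Fin N =>
        if h : (j : ℕ) < M then ψ i (x ⟨j, h⟩) else ψbar i j).det *
      ∏ k : Fin M, ξ k (x k))
    = pseudoDet (fun i j k =>
        if hk : (k : ℕ) < M then
          if hi : (i : ℕ) < M then
            ∫ x in Set.Icc a b, φ ⟨i, hi⟩ x * ψ j x * ξ ⟨k, hk⟩ x
          else ∫ x in Set.Icc a b, ψ j x * ξ ⟨k, hk⟩ x
        else if (i : ℕ) < (k : ℕ) then 0 else ψbar j k) := by
  have hf : ∀ (p : Equiv.Perm (Fin M) × Equiv.Perm (Fin N)) (k : Fin M), IntegrableOn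
      (fun t => φ (p.1 k) t * ψ (p.2 (Fin.castLE hMN k)) t * ξ k t) (Set.Icc a b) :=
    fun p k => hInt1 _ _ _
  simp only [det_mul_det_mul_prod_eq_sum hMN]
  rw [volume_pi, setIntegral_univ_pi_sum_mul_prod _ hf,
    pseudoDet_eq_sum_of_lower_triangular hMN _ fun i j k hMk hik => by simp [not_lt.2 hMk, hik],
    Fintype.sum_prod_type]
  refine Finset.sum_congr rfl fun ν _ => Finset.sum_congr rfl fun σ _ => ?_
  have hout (j : {j : Fin N // ¬ (j : ℕ) < M}) : ¬ ((j : Fin N) : ℕ) < M := j.2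
  simp [mul_right_comm, hout]

/-- Theorem 2.1: the integral over the hypercube `[a,b]^M` of
`det Φ(x) ⬝ det Ψ(x) ⬝ Π_k ξ_k(x_k)` equals the pseudo-determinant `T(C)`. -/
theorem stmt_1 {M N : ℕ} (hM : 1 ≤ M) (hMN : M ≤ N) {a b : ℝ} (hab : a ≤ b)
    (φ : Fin M → ℝ → ℂ) (ψ : Fin N → ℝ → ℂ) (ξ : Fin M → ℝ → ℂ)
    (ψbar : Fin N → Fin N → ℂ)
    (hφ : ∀ i, Measurable (φ i)) (hψ : ∀ j, Measurable (ψ j))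
    (hξ : ∀ k, Measurable (ξ k))
    (hInt1 : ∀ (i : Fin M) (j : Fin N) (k : Fin M),
      IntegrableOn (fun x => φ i x * ψ j x * ξ k x) (Set.Icc a b))
    (hInt2 : ∀ (j : Fin N) (k : Fin M),
      IntegrableOn (fun x => ψ j x * ξ k x) (Set.Icc a b)) :
    (∫ x : Fin M → ℝ in Set.univ.pi fun _ : Fin M => Set.Icc a b,
      (Matrix.of fun i j : Fin M => φ i (x j)).det *
      (Matrix.of fun i j : Fin N =>
        if h : (j : ℕ) < M then ψ i (x ⟨j, h⟩) else ψbar i j).det *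
      ∏ k : Fin M, ξ k (x k))
    = pseudoDet (fun i j k =>
        if hk : (k : ℕ) < M then
          if hi : (i : ℕ) < M then
            ∫ x in Set.Icc a b, φ ⟨i, hi⟩ x * ψ j x * ξ ⟨k, hk⟩ x
          else ∫ x in Set.Icc a b, ψ j x * ξ ⟨k, hk⟩ x
        else if (i : ℕ) < (k : ℕ) then 0 else ψbar j k) :=
  stmt_1_general hMN φ ψ ξ ψbar hInt1
end

section
/- Under the matrix setup below, let α ≤ a ≤ b ≤ β. Then ∫_{b ≥ x_1 ≥ x_2 ≥ ⋯ ≥ x_M ≥ a} det Φ(x) · det Ψ(x) · Π_{k=1}^M ξ(x_k) dx = (1/M!) · T(A), where A is the N×N×N tensor with entries: a_{i,j,k} = ∫_a^b φ_i(x) ψ_j(x) ξ(x) dx for i ≤ M and k ≤ M; a_{i,j,k} = ∫_a^b ψ_j(x) ξ(x) dx for i > M and k ≤ M; a_{i,j,k} = 0 for k > M and i < k; and a_{i,j,k} = ψ̄_{j,k} for k > M and i ≥ k. (When K·det Φ·det Ψ·Π ξ is the joint density of M ordered random variables in [α,β], the left-hand side times K is the probability that all of them lie in [a,b].) -/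
open MeasureTheory

/-- `ς_i(x) = φ_i(x) ξ(x)` for `i ≤ M`, and `ς_i(x) = ξ(x)` for `i > M`. -/
def varsigma {M N : ℕ} (φ : Fin M → ℝ → ℂ) (ξ : ℝ → ℂ) (i : Fin N) (x : ℝ) : ℂ :=
  if h : (i : ℕ) < M then φ ⟨i, h⟩ x * ξ x else ξ x

/-- The `M × M` matrix `Φ(x)` with entries `φ_i(x_j)`. -/
def PhiMat {M : ℕ} (φ : Fin M → ℝ → ℂ) (x : Fin M → ℝ) : Matrix (Fin M) (Fin M) ℂ :=
  Matrix.of fun i j => φ i (x j)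

/-- The `N × N` matrix `Ψ(x)` with entries `ψ_i(x_j)` for `j ≤ M` and `ψ̄_{i,j}` for `j > M`. -/
def PsiMat {M N : ℕ} (ψ : Fin N → ℝ → ℂ) (ψbar : Fin N → Fin N → ℂ)
    (x : Fin M → ℝ) : Matrix (Fin N) (Fin N) ℂ :=
  Matrix.of fun i j => if h : (j : ℕ) < M then ψ i (x ⟨j, h⟩) else ψbar i j

/-!
The integrand `f x = det Φ(x) · det Ψ(x) · ∏ ξ(x_k)` is symmetric: permuting the variables by
`σ` permutes the columns of `Φ(x)` and of `Ψ(x)` by `σ`, so both determinants pick up `sgn σ`.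
Since almost every point of the cube `[a,b]^M` has distinct coordinates, the cube is, up to a
null set, the disjoint union of the `M!` images of the ordered region, so the ordered integral is
`1/M!` times the cube integral. On the cube, expanding `det Ψ` along its permutations leaves
matrices whose `j`-th column depends only on `x_j`; by Fubini and multilinearity of `det`, their
integrals are determinants of one-dimensional integrals. On the other side, `T(A)` is the signed sum
over `σ` of the determinants of the slices `(a_{i,σ(k),k})_{i,k}`. Each slice is block lower
triangular with a lower triangular block on the indices `> M`, so its determinant is
`det(∫ φ_i ψ_{σ(j)} ξ)_{i,j ≤ M} · ∏_{k > M} ψ̄_{σ(k),k}`, which is exactly the `σ`-term of the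
cube integral.
-/

open MeasureTheory Equiv Set Function Matrix

theorem ae_injective_pi {ι : Type*} [Fintype ι] : ∀ᵐ x : ι → ℝ, Function.Injective x := by
  classical
  have hdiag : ∀ i j : ι, i ≠ j → volume {x : ι → ℝ | x i = x j} = 0 := by
    intro i j hij
    let ℓ : (ι → ℝ) →ₗ[ℝ] ℝ := LinearMap.proj (R := ℝ) (φ := fun _ => ℝ) i - LinearMap.proj j
    have hker : {x : ι → ℝ | x i = x j} = (LinearMap.ker ℓ : Set (ι → ℝ)) := by
      ext x; simp [ℓ, sub_eq_zero]
    rw [hker]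
    refine Measure.addHaar_submodule _ _ fun htop => ?_
    have h : (Pi.single i 1 : ι → ℝ) ∈ LinearMap.ker ℓ := htop ▸ Submodule.mem_top
    simp [ℓ, Pi.single_eq_of_ne (Ne.symm hij)] at h
  have hsub : {x : ι → ℝ | ¬ Function.Injective x} ⊆
      ⋃ (i : ι) (j : ι) (_ : i ≠ j), {x | x i = x j} := by
    intro x hx
    simp only [Function.Injective, mem_ofPred_eq, not_forall] at hx
    obtain ⟨i, j, hij, hne⟩ := hx
    exact mem_iUnion₂.2 ⟨i, j, mem_iUnion.2 ⟨hne, hij⟩⟩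
  refine measure_mono_null hsub ?_
  exact measure_iUnion_null fun i => measure_iUnion_null fun j => measure_iUnion_null (hdiag i j)

theorem eq_of_antitone_comp_perm {α : Type*} [LinearOrder α] {n : ℕ} {x : Fin n → α}
    (hx : Function.Injective x) {σ τ : Perm (Fin n)} (hσ : Antitone (x ∘ σ))
    (hτ : Antitone (x ∘ τ)) : σ = τ := by
  have h := Tuple.unique_monotone (f := OrderDual.toDual ∘ x) (σ := σ) (τ := τ) hσ hτ
  exact Equiv.ext fun i => hx (congrFun h i)

theorem antitone_comp_sort {α : Type*} [LinearOrder α] {n : ℕ} (x : Fin n → α) :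
    Antitone (x ∘ Tuple.sort (OrderDual.toDual ∘ x)) :=
  Tuple.monotone_sort (OrderDual.toDual ∘ x)

section Symmetrization

variable {E : Type*} [NormedAddCommGroup E] [NormedSpace ℝ E]

theorem setIntegral_antitone_of_comp_perm {M : ℕ} {f : (Fin M → ℝ) → E} (hf : Integrable f)
    (hsym : ∀ (σ : Perm (Fin M)) x, f (x ∘ σ) = f x) :
    ∫ x in {x | Antitone x}, f x = (M.factorial : ℝ)⁻¹ • ∫ x, f x := by
  -- `e σ x = x ∘ σ`
  let e : Perm (Fin M) → (Fin M → ℝ) ≃ᵐ (Fin M → ℝ) :=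
    fun σ => MeasurableEquiv.arrowCongr' σ.symm (MeasurableEquiv.refl ℝ)
  let S : Perm (Fin M) → Set (Fin M → ℝ) := fun σ => e σ ⁻¹' {x | Antitone x}
  have hS : ∀ σ, MeasurableSet (S σ) := fun σ =>
    (e σ).measurable isClosed_antitone.measurableSet
  have hcover : (⋃ σ, S σ) = univ :=
    eq_univ_of_forall fun x =>
      mem_iUnion.2 ⟨Tuple.sort (OrderDual.toDual ∘ x), antitone_comp_sort x⟩
  have hdisj : Pairwise (AEDisjoint volume on S) := by
    intro σ τ hστ
    refine measure_mono_null (fun x hx => ?_) (ae_iff.1 ae_injective_pi)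
    exact fun hinj => hστ (eq_of_antitone_comp_perm hinj hx.1 hx.2)
  have hpiece : ∀ σ, ∫ x in S σ, f x = ∫ x in {x | Antitone x}, f x := fun σ => by
    refine (setIntegral_congr_fun (hS σ) fun x _ => (hsym σ x).symm).trans ?_
    exact (volume_preserving_arrowCongr' _ _ (MeasurePreserving.id _)).setIntegral_preimage_emb
      (e σ).measurableEmbedding _ _
  have hsum : ∫ x, f x = (M.factorial : ℝ) • ∫ x in {x | Antitone x}, f x := by
    rw [← setIntegral_univ, ← hcover, integral_iUnion_ae (fun σ => (hS σ).nullMeasurableSet)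
      hdisj hf.integrableOn, tsum_fintype]
    simp only [hpiece, Finset.sum_const, Finset.card_univ, Fintype.card_perm, Fintype.card_fin,
      ← Nat.cast_smul_eq_nsmul ℝ]
  rw [hsum, inv_smul_smul₀ (Nat.cast_ne_zero.2 M.factorial_ne_zero)]

theorem setIntegral_antitone_inter_cube {M : ℕ} {f : (Fin M → ℝ) → E} {K : Set ℝ}
    (hK : MeasurableSet K) (hf : IntegrableOn f (univ.pi fun _ => K))
    (hsym : ∀ (σ : Perm (Fin M)) x, f (x ∘ σ) = f x) :
    ∫ x in {x | Antitone x ∧ ∀ i, x i ∈ K}, f x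
      = (M.factorial : ℝ)⁻¹ • ∫ x in univ.pi fun _ => K, f x := by
  have hC : MeasurableSet (univ.pi fun _ : Fin M => K) := MeasurableSet.univ_pi fun _ => hK
  have hCsym : ∀ (σ : Perm (Fin M)) x, x ∘ σ ∈ univ.pi (fun _ => K) ↔ x ∈ univ.pi fun _ => K :=
    fun σ x => by
      simp only [mem_univ_pi, Function.comp_apply]
      exact σ.forall_congr_right (q := fun i => x i ∈ K)
  have h := setIntegral_antitone_of_comp_perm ((integrable_indicator_iff hC).2 hf)
    fun σ x => by
      classical
      simp only [indicator_apply, hsym, hCsym]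
  have hset : {x : Fin M → ℝ | Antitone x ∧ ∀ i, x i ∈ K}
      = {x | Antitone x} ∩ univ.pi fun _ => K := by
    ext x; simp only [mem_inter_iff, mem_ofPred_eq, mem_univ_pi]
  rwa [hset, ← setIntegral_indicator hC, ← integral_indicator hC]

end Symmetrization

section ColumnSeparable

variable {ι X 𝕜 : Type*} [Fintype ι] [DecidableEq ι] [RCLike 𝕜] [MeasurableSpace X]
  {ν : Measure X} [SigmaFinite ν] {F : ι → ι → X → 𝕜}

theorem integrable_det_of_apply_pi (hF : ∀ i j, Integrable (F i j) ν) :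
    Integrable (fun x : ι → X => (of fun i j => F i j (x j)).det) (Measure.pi fun _ => ν) := by
  simp only [det_apply', of_apply]
  exact integrable_finsetSum _ fun σ _ =>
    (Integrable.fintype_prod fun j => hF (σ j) j).const_mul _

theorem integral_det_of_apply_pi (hF : ∀ i j, Integrable (F i j) ν) :
    ∫ x : ι → X, (of fun i j => F i j (x j)).det ∂(Measure.pi fun _ => ν)
      = (of fun i j => ∫ t, F i j t ∂ν).det := by
  simp only [det_apply', of_apply]
  rw [integral_finsetSum _ fun σ _ =>
    (Integrable.fintype_prod fun j => hF (σ j) j).const_mul _]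
  exact Finset.sum_congr rfl fun σ _ => by
    rw [integral_const_mul, integral_fintype_prod_eq_prod fun j => F (σ j) j]

end ColumnSeparable

theorem pseudoDet_eq_sum_det {N : ℕ} (A : Fin N → Fin N → Fin N → ℂ) :
    pseudoDet A = ∑ σ : Perm (Fin N), (Perm.sign σ : ℂ) * (of fun i k => A i (σ k) k).det := by
  rw [pseudoDet, Finset.sum_comm]
  refine Finset.sum_congr rfl fun σ _ => ?_
  rw [det_apply', Finset.mul_sum]
  exact Finset.sum_congr rfl fun μ _ => by simp only [of_apply]; ring

theorem det_eq_det_toSquareBlockProp_mul_prod {R : Type*} [CommRing R] {M N : ℕ}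
    {B : Matrix (Fin N) (Fin N) R} (hB : ∀ i k : Fin N, M ≤ (k : ℕ) → i < k → B i k = 0) :
    B.det = (B.toSquareBlockProp fun k => (k : ℕ) < M).det
      * ∏ k : {k : Fin N // ¬ (k : ℕ) < M}, B k k := by
  rw [twoBlockTriangular_det' B _ fun i hi k hk => hB i k (not_lt.1 hk) (by omega),
    det_of_isLowerTriangular (B.toSquareBlockProp fun k => ¬ (k : ℕ) < M)]
  · rfl
  · intro i k hik
    exact hB i k (not_lt.1 k.2) hik

section Setting

variable {M N : ℕ} {φ : Fin M → ℝ → ℂ} {ψ : Fin N → ℝ → ℂ} {ξ : ℝ → ℂ}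
  {ψbar : Fin N → Fin N → ℂ}

theorem varsigma_castLE (hMN : M ≤ N) (i : Fin M) (t : ℝ) :
    varsigma φ ξ (Fin.castLE hMN i) t = φ i t * ξ t := by
  simp [varsigma]

theorem det_PhiMat_comp_perm (x : Fin M → ℝ) (σ : Perm (Fin M)) :
    (PhiMat φ (x ∘ σ)).det = Perm.sign σ * (PhiMat φ x).det :=
  det_permute' σ (PhiMat φ x)

theorem PsiMat_comp_perm (hMN : M ≤ N) (x : Fin M → ℝ) (σ : Perm (Fin M)) :
    PsiMat ψ ψbar (x ∘ σ)
      = (PsiMat ψ ψbar x).submatrix id (σ.extendDomain (Fin.castLEquiv hMN)) := by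
  ext i k
  by_cases hk : (k : ℕ) < M
  · rw [submatrix_apply, Perm.extendDomain_apply_subtype σ (Fin.castLEquiv hMN) (b := k) hk]
    simp [PsiMat, hk]
  · rw [submatrix_apply, Perm.extendDomain_apply_not_subtype σ (Fin.castLEquiv hMN) (b := k) hk]
    simp [PsiMat, hk]

theorem det_PsiMat_comp_perm (hMN : M ≤ N) (x : Fin M → ℝ) (σ : Perm (Fin M)) :
    (PsiMat ψ ψbar (x ∘ σ)).det = Perm.sign σ * (PsiMat ψ ψbar x).det := by
  rw [PsiMat_comp_perm hMN, det_permute', Perm.sign_extendDomain]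

theorem det_PhiMat_mul_det_PsiMat_mul_prod_comp_perm (hMN : M ≤ N) (x : Fin M → ℝ)
    (σ : Perm (Fin M)) :
    (PhiMat φ (x ∘ σ)).det * (PsiMat ψ ψbar (x ∘ σ)).det * ∏ k, ξ (x (σ k))
      = (PhiMat φ x).det * (PsiMat ψ ψbar x).det * ∏ k, ξ (x k) := by
  have hsign : ((Perm.sign σ : ℤ) : ℂ) * (Perm.sign σ : ℤ) = 1 := by
    rw [← Int.cast_mul, ← Units.val_mul, Int.units_mul_self, Units.val_one, Int.cast_one]
  rw [det_PhiMat_comp_perm, det_PsiMat_comp_perm hMN, Equiv.prod_comp σ (fun k => ξ (x k))]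
  linear_combination ((PhiMat φ x).det * (PsiMat ψ ψbar x).det * ∏ k, ξ (x k)) * hsign

theorem det_PsiMat (hMN : M ≤ N) (x : Fin M → ℝ) :
    (PsiMat ψ ψbar x).det = ∑ σ : Perm (Fin N), (Perm.sign σ : ℂ) *
      ((∏ i : Fin M, ψ (σ (Fin.castLE hMN i)) (x i))
        * ∏ k : {k : Fin N // ¬ (k : ℕ) < M}, ψbar (σ k) k) := by
  rw [det_apply']
  refine Finset.sum_congr rfl fun σ _ => ?_
  rw [← Fintype.prod_subtype_mul_prod_subtype (fun k : Fin N => (k : ℕ) < M),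
    ← (Fin.castLEquiv hMN).prod_comp]
  congr 2
  · exact Finset.prod_congr rfl fun i _ => by simp [PsiMat]
  · exact Finset.prod_congr rfl fun k _ => by simp [PsiMat, k.2]

theorem det_PhiMat_mul_det_PsiMat_mul_prod (hMN : M ≤ N) (x : Fin M → ℝ) :
    (PhiMat φ x).det * (PsiMat ψ ψbar x).det * ∏ k, ξ (x k)
      = ∑ σ : Perm (Fin N), (Perm.sign σ : ℂ) *
        ((∏ k : {k : Fin N // ¬ (k : ℕ) < M}, ψbar (σ k) k)
          * (of fun i j => φ i (x j) * ψ (σ (Fin.castLE hMN j)) (x j) * ξ (x j)).det) := by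
  rw [det_PsiMat hMN, Finset.mul_sum, Finset.sum_mul]
  refine Finset.sum_congr rfl fun σ _ => ?_
  have hcol : (of fun i j => φ i (x j) * ψ (σ (Fin.castLE hMN j)) (x j) * ξ (x j))
      = of fun i j => (ψ (σ (Fin.castLE hMN j)) (x j) * ξ (x j)) * PhiMat φ x i j := by
    ext i j; simp only [PhiMat, of_apply]; ring
  rw [hcol, det_mul_row, Finset.prod_mul_distrib]
  ring

variable (φ ψ ξ ψbar) in
noncomputable def intervalTensor (K : Set ℝ) : Fin N → Fin N → Fin N → ℂ := fun i j k =>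
  if (k : ℕ) < M then
    if hi : (i : ℕ) < M then ∫ x in K, φ ⟨i, hi⟩ x * ψ j x * ξ x
    else ∫ x in K, ψ j x * ξ x
  else if (i : ℕ) < (k : ℕ) then 0 else ψbar j k

theorem det_intervalTensor_slice (hMN : M ≤ N) (K : Set ℝ) (σ : Perm (Fin N)) :
    (of fun i k => intervalTensor φ ψ ξ ψbar K i (σ k) k).det
      = (of fun i j : Fin M => ∫ t in K, φ i t * ψ (σ (Fin.castLE hMN j)) t * ξ t).det
        * ∏ k : {k : Fin N // ¬ (k : ℕ) < M}, ψbar (σ k) k := by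
  rw [det_eq_det_toSquareBlockProp_mul_prod (M := M) fun i k hk hik => by
    simp [intervalTensor, not_lt.2 hk, hik]]
  congr 1
  · rw [← det_submatrix_equiv_self (Fin.castLEquiv hMN)]
    congr 1
    ext i j
    simp [toSquareBlockProp_def, intervalTensor]
  · exact Finset.prod_congr rfl fun k _ => by simp [intervalTensor, k.2]

theorem integrable_and_integral_det_PhiMat_mul_det_PsiMat_pi (hMN : M ≤ N) {K : Set ℝ}
    (hG : ∀ i j, IntegrableOn (fun t => φ i t * ψ j t * ξ t) K) :
    Integrable (fun x => (PhiMat φ x).det * (PsiMat ψ ψbar x).det * ∏ k, ξ (x k))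
        (Measure.pi fun _ => volume.restrict K)
      ∧ ∫ x, (PhiMat φ x).det * (PsiMat ψ ψbar x).det * ∏ k, ξ (x k)
          ∂(Measure.pi fun _ => volume.restrict K)
        = pseudoDet (intervalTensor φ ψ ξ ψbar K) := by
  simp only [det_PhiMat_mul_det_PsiMat_mul_prod hMN]
  have hint : ∀ σ : Perm (Fin N), Integrable (fun x : Fin M → ℝ =>
      (of fun i j => φ i (x j) * ψ (σ (Fin.castLE hMN j)) (x j) * ξ (x j)).det)
        (Measure.pi fun _ => volume.restrict K) := fun σ =>
    integrable_det_of_apply_pi (F := fun i j t => φ i t * ψ (σ (Fin.castLE hMN j)) t * ξ t)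
      fun i j => hG i _
  refine ⟨integrable_finsetSum _ fun σ _ => ((hint σ).const_mul _).const_mul _, ?_⟩
  rw [integral_finsetSum _ fun σ _ => ((hint σ).const_mul _).const_mul _, pseudoDet_eq_sum_det]
  refine Finset.sum_congr rfl fun σ _ => ?_
  rw [integral_const_mul, integral_const_mul, integral_det_of_apply_pi (fun i j => hG i _),
    det_intervalTensor_slice hMN]
  ring

end Setting

theorem stmt_7_general {M N : ℕ} (hMN : M ≤ N) {α β a b : ℝ}
    (φ : Fin M → ℝ → ℂ) (ψ : Fin N → ℝ → ℂ) (ξ : ℝ → ℂ) (ψbar : Fin N → Fin N → ℂ)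
    (hInt : ∀ (i j : Fin N),
      IntegrableOn (fun x => varsigma φ ξ i x * ψ j x) (Set.Icc α β))
    (hαa : α ≤ a) (hbβ : b ≤ β) :
    (∫ x : Fin M → ℝ in
        {x | (∀ i j : Fin M, i ≤ j → x j ≤ x i) ∧ ∀ i : Fin M, x i ∈ Set.Icc a b},
      (PhiMat φ x).det * (PsiMat ψ ψbar x).det * ∏ k : Fin M, ξ (x k))
    = ((M.factorial : ℕ) : ℂ)⁻¹ *
      pseudoDet (fun i j k =>
        if hk : (k : ℕ) < M then
          if hi : (i : ℕ) < M then ∫ x in Set.Icc a b, φ ⟨i, hi⟩ x * ψ j x * ξ x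
          else ∫ x in Set.Icc a b, ψ j x * ξ x
        else if (i : ℕ) < (k : ℕ) then 0 else ψbar j k) := by
  have hG : ∀ i j, IntegrableOn (fun t => φ i t * ψ j t * ξ t) (Icc a b) := fun i j => by
    simpa only [varsigma_castLE hMN, mul_right_comm] using
      (hInt (Fin.castLE hMN i) j).mono_set (Icc_subset_Icc hαa hbβ)
  obtain ⟨hf, hcube⟩ := integrable_and_integral_det_PhiMat_mul_det_PsiMat_pi (ψbar := ψbar) hMN hG
  rw [← Measure.restrict_pi_pi, ← volume_pi] at hf hcube
  refine (setIntegral_antitone_inter_cube measurableSet_Icc hf fun σ x =>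
    det_PhiMat_mul_det_PsiMat_mul_prod_comp_perm hMN x σ).trans ?_
  rw [hcube, Complex.real_smul]
  push_cast
  rfl

/-- Probability that all eigenvalues lie in `[a,b]`: the integral of
`det Φ ⬝ det Ψ ⬝ Π ξ` over the ordered region `b ≥ x_1 ≥ ⋯ ≥ x_M ≥ a`
equals `(1/M!) ⬝ T(A)`. -/
theorem stmt_7 {M N : ℕ} (hM : 1 ≤ M) (hMN : M ≤ N) {α β a b : ℝ} (hαβ : α < β)
    (φ : Fin M → ℝ → ℂ) (ψ : Fin N → ℝ → ℂ) (ξ : ℝ → ℂ) (ψbar : Fin N → Fin N → ℂ)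
    (hφ : ∀ i, Measurable (φ i)) (hψ : ∀ j, Measurable (ψ j)) (hξ : Measurable ξ)
    (hInt : ∀ (i j : Fin N),
      IntegrableOn (fun x => varsigma φ ξ i x * ψ j x) (Set.Icc α β))
    (hαa : α ≤ a) (hab : a ≤ b) (hbβ : b ≤ β) :
    (∫ x : Fin M → ℝ in
        {x | (∀ i j : Fin M, i ≤ j → x j ≤ x i) ∧ ∀ i : Fin M, x i ∈ Set.Icc a b},
      (PhiMat φ x).det * (PsiMat ψ ψbar x).det * ∏ k : Fin M, ξ (x k))
    = ((M.factorial : ℕ) : ℂ)⁻¹ *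
      pseudoDet (fun i j k =>
        if hk : (k : ℕ) < M then
          if hi : (i : ℕ) < M then ∫ x in Set.Icc a b, φ ⟨i, hi⟩ x * ψ j x * ξ x
          else ∫ x in Set.Icc a b, ψ j x * ξ x
        else if (i : ℕ) < (k : ℕ) then 0 else ψbar j k) :=
  stmt_7_general hMN φ ψ ξ ψbar hInt hαa hbβ
end

section
/- Let M ≥ 1 and a ≤ b be reals. Let φ_1,…,φ_M : ℝ → ℂ, ψ_1,…,ψ_M : ℝ → ℂ and ξ : ℝ → ℂ be measurable functions such that φ_i·ψ_j·ξ is Lebesgue integrable on [a,b] for all 1 ≤ i, j ≤ M. For x = (x_1,…,x_M) let Φ(x) and Ψ(x) be the M×M matrices with (i,j) entries φ_i(x_j) and ψ_i(x_j), respectively. Then ∫_{b ≥ x_1 ≥ x_2 ≥ ⋯ ≥ x_M ≥ a} det Φ(x) · det Ψ(x) · Π_{k=1}^M ξ(x_k) dx = det B, where B is the M×M matrix with entries b_{i,j} = ∫_a^b φ_i(x) ψ_j(x) ξ(x) dx. (When K·det Φ·det Ψ·Π ξ is the joint density of M ordered random variables, multiplying by K gives the probability that all eigenvalues lie in [a,b]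 as K·det B.) -/
/-!
Expanding both determinants over permutations and integrating term by term (Fubini) gives the
Andréief identity on the whole cube `[a, b]ᴹ`: the integral there is `M! · det B`. The integrand is
invariant under permutations of the coordinates, since both determinants change by the same sign.
Off the null set where two coordinates coincide, the cube is the disjoint union of the `M!`
images of the ordered region under such permutations, so the ordered region carries exactly
`1 / M!` of the cube integral.
-/

open MeasureTheory Equiv Matrix Function

theorem Int.cast_units_mul_self {R : Type*} [Ring R] (u : ℤˣ) : ((u : ℤ) : R) * (u : ℤ) = 1 := by
  rw [← Int.cast_mul, Int.units_coe_mul_self, Int.cast_one]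

theorem det_mul_det_eq_sum_det {α ι R : Type*} [Fintype ι] [DecidableEq ι] [CommRing R]
    (f g : ι → α → R) (x : ι → α) :
    (of fun i j => f i (x j)).det * (of fun i j => g i (x j)).det
      = ∑ σ : Perm ι, (Perm.sign σ : R) * (of fun i j => f (σ j) (x j) * g i (x j)).det := by
  rw [det_apply' (of fun i j => f i (x j)), Finset.sum_mul]
  refine Finset.sum_congr rfl fun σ _ => ?_
  rw [mul_assoc, ← det_mul_row]
  rfl

theorem det_mul_det_comp_perm {α ι R : Type*} [Fintype ι] [DecidableEq ι] [CommRing R]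
    (f g : ι → α → R) (x : ι → α) (σ : Perm ι) :
    (of fun i j => f i ((x ∘ σ) j)).det * (of fun i j => g i ((x ∘ σ) j)).det
      = (of fun i j => f i (x j)).det * (of fun i j => g i (x j)).det := by
  change ((of fun i j => f i (x j)).submatrix id σ).det
      * ((of fun i j => g i (x j)).submatrix id σ).det = _
  rw [det_permute', det_permute', mul_mul_mul_comm, Int.cast_units_mul_self, one_mul]

section Andreief

variable {α ι 𝕜 : Type*} [MeasurableSpace α] {μ : Measure α} [SigmaFinite μ] [RCLike 𝕜]
  [Fintype ι] [DecidableEq ι]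

theorem integrable_det_of_apply {h : ι → ι → α → 𝕜} (hh : ∀ i j, Integrable (h i j) μ) :
    Integrable (fun x : ι → α => (of fun i j => h i j (x j)).det) (Measure.pi fun _ => μ) := by
  simp only [det_apply', of_apply]
  exact integrable_finsetSum _ fun σ _ =>
    (Integrable.fintype_prod fun j => hh (σ j) j).const_mul _

theorem integral_det_of_apply {h : ι → ι → α → 𝕜} (hh : ∀ i j, Integrable (h i j) μ) :
    ∫ x, (of fun i j => h i j (x j)).det ∂(Measure.pi fun _ => μ)
      = (of fun i j => ∫ t, h i j t ∂μ).det := by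
  simp only [det_apply', of_apply]
  rw [integral_finsetSum _ fun σ _ =>
    (Integrable.fintype_prod fun j => hh (σ j) j).const_mul _]
  simp only [integral_const_mul, integral_fintype_prod_eq_prod]

variable {f g : ι → α → 𝕜}

theorem integrable_det_mul_det (hfg : ∀ i j, Integrable (fun t => f i t * g j t) μ) :
    Integrable (fun x : ι → α => (of fun i j => f i (x j)).det * (of fun i j => g i (x j)).det)
      (Measure.pi fun _ => μ) := by
  simp only [det_mul_det_eq_sum_det]
  exact integrable_finsetSum _ fun σ _ =>
    (integrable_det_of_apply fun i j => hfg (σ j) i).const_mul _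

theorem integral_det_mul_det (hfg : ∀ i j, Integrable (fun t => f i t * g j t) μ) :
    ∫ x, (of fun i j => f i (x j)).det * (of fun i j => g i (x j)).det ∂(Measure.pi fun _ => μ)
      = (Fintype.card ι).factorial • (of fun i j => ∫ t, f i t * g j t ∂μ).det := by
  set C : Matrix ι ι 𝕜 := of fun i j => ∫ t, f i t * g j t ∂μ
  have hterm : ∀ σ : Perm ι,
      ∫ x, (of fun i j => f (σ j) (x j) * g i (x j)).det ∂(Measure.pi fun _ => μ)
        = Perm.sign σ * C.det := by
    intro σ
    -- the integrated matrix is `Cᵀ` with its columns permuted by `σ`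
    rw [integral_det_of_apply fun i j => hfg (σ j) i, ← det_transpose C, ← det_permute']
    rfl
  simp only [det_mul_det_eq_sum_det]
  rw [integral_finsetSum _ fun σ _ =>
    (integrable_det_of_apply fun i j => hfg (σ j) i).const_mul _]
  simp only [integral_const_mul, hterm, ← mul_assoc, Int.cast_units_mul_self, one_mul,
    Finset.sum_const, Finset.card_univ, Fintype.card_perm]

end Andreief

section Sorting

variable {α : Type*} [LinearOrder α] {n : ℕ}

theorem antitone_comp_revPerm_trans_sort (x : Fin n → α) :
    Antitone (x ∘ (Fin.revPerm.trans (Tuple.sort x))) :=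
  (Tuple.monotone_sort x).comp_antitone Fin.rev_anti

theorem eq_revPerm_trans_sort_of_antitone {x : Fin n → α} (hx : Injective x) {σ : Perm (Fin n)}
    (hσ : Antitone (x ∘ σ)) : σ = Fin.revPerm.trans (Tuple.sort x) := by
  have hsort : Fin.revPerm.trans σ = Tuple.sort x := by
    have hmono : Monotone ((x ∘ σ) ∘ Fin.rev) := Antitone.comp hσ Fin.rev_anti
    refine Tuple.eq_sort_iff.2 ⟨hmono, fun i j hij hxij => ?_⟩
    exact absurd (Fin.revPerm.injective (σ.injective (hx hxij))) hij.ne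
  rw [← hsort]
  ext i
  simp

end Sorting

theorem measurableSet_setOf_antitone {ι α : Type*} [Preorder ι] [Countable ι] [MeasurableSpace α]
    [TopologicalSpace α] [PartialOrder α] [OrderClosedTopology α] [SecondCountableTopology α]
    [OpensMeasurableSpace α] :
    MeasurableSet {x : ι → α | Antitone x} := by
  simp only [Antitone, Set.ofPred_forall]
  exact .iInter fun i => .iInter fun j => .iInter fun _ =>
    measurableSet_le (measurable_pi_apply j) (measurable_pi_apply i)

theorem ae_injective_volume {ι : Type*} [Fintype ι] : ∀ᵐ x : ι → ℝ, Injective x := by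
  classical
  refine ae_all_iff.2 fun i => ae_all_iff.2 fun j => ?_
  rcases eq_or_ne i j with rfl | hij
  · exact ae_of_all _ fun _ _ => rfl
  rw [ae_iff]
  set L : (ι → ℝ) →ₗ[ℝ] ℝ := (LinearMap.proj i : (ι → ℝ) →ₗ[ℝ] ℝ) - LinearMap.proj j
  have hset : {x : ι → ℝ | ¬(x i = x j → i = j)} = LinearMap.ker L := by
    ext x
    simp [L, sub_eq_zero, hij]
  rw [hset]
  refine Measure.addHaar_submodule _ _ fun htop => ?_
  have hmem : (Pi.single i 1 : ι → ℝ) ∈ LinearMap.ker L := htop ▸ Submodule.mem_top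
  simp [L, hij] at hmem

theorem integral_eq_factorial_smul_setIntegral_antitone {E : Type*} [NormedAddCommGroup E]
    [NormedSpace ℝ E] {n : ℕ} {μ : Measure ℝ} [SigmaFinite μ]
    (hinj : ∀ᵐ x ∂(Measure.pi fun _ : Fin n => μ), Injective x)
    {F : (Fin n → ℝ) → E} (hF : Integrable F (Measure.pi fun _ => μ))
    (hFσ : ∀ (σ : Perm (Fin n)) x, F (x ∘ σ) = F x) :
    ∫ x, F x ∂(Measure.pi fun _ => μ)
      = n.factorial • ∫ x in {x | Antitone x}, F x ∂(Measure.pi fun _ => μ) := by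
  set ν := Measure.pi fun _ : Fin n => μ
  set chamber : Perm (Fin n) → Set (Fin n → ℝ) := fun σ => {x | Antitone (x ∘ σ)}
  have hcover : ⋃ σ, chamber σ = Set.univ :=
    Set.eq_univ_of_forall fun x =>
      Set.mem_iUnion.2 ⟨_, antitone_comp_revPerm_trans_sort x⟩
  have hdisj : Pairwise (AEDisjoint ν on chamber) := fun σ τ hστ => by
    refine measure_mono_null (fun x hx (hinjx : Injective x) => hστ ?_) (ae_iff.1 hinj)
    exact (eq_revPerm_trans_sort_of_antitone hinjx hx.1).trans
      (eq_revPerm_trans_sort_of_antitone hinjx hx.2).symm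
  have hchamber : ∀ σ, ∫ x in chamber σ, F x ∂ν = ∫ x in {x | Antitone x}, F x ∂ν := by
    intro σ
    let e : (Fin n → ℝ) ≃ᵐ (Fin n → ℝ) := MeasurableEquiv.arrowCongr' σ.symm (.refl ℝ)
    have he : ⇑e = fun x => x ∘ σ := rfl
    have hpres : MeasurePreserving e ν ν :=
      measurePreserving_arrowCongr' _ _ σ.symm _ fun _ => .id μ
    calc ∫ x in chamber σ, F x ∂ν = ∫ x in e ⁻¹' {x | Antitone x}, F (e x) ∂ν := by
          simp only [he, hFσ]
          rfl
      _ = _ := hpres.setIntegral_preimage_emb e.measurableEmbedding _ _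
  have hmeas : ∀ σ, NullMeasurableSet (chamber σ) ν := fun σ =>
    (measurableSet_setOf_antitone.preimage (measurable_pi_lambda _ fun j =>
      measurable_pi_apply (σ j))).nullMeasurableSet
  calc ∫ x, F x ∂ν = ∫ x in ⋃ σ, chamber σ, F x ∂ν := by rw [hcover, Measure.restrict_univ]
    _ = ∑ σ, ∫ x in chamber σ, F x ∂ν := by
      rw [integral_iUnion_ae hmeas hdisj hF.integrableOn, tsum_fintype]
    _ = n.factorial • ∫ x in {x | Antitone x}, F x ∂ν := by
      simp only [hchamber, Finset.sum_const, Finset.card_univ, Fintype.card_perm, Fintype.card_fin]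

theorem stmt_8_general {M : ℕ} {a b : ℝ}
    (φ ψ : Fin M → ℝ → ℂ) (ξ : ℝ → ℂ)
    (hInt : ∀ i j : Fin M,
      IntegrableOn (fun x => φ i x * ψ j x * ξ x) (Set.Icc a b)) :
    (∫ x : Fin M → ℝ in
        {x | (∀ i j : Fin M, i ≤ j → x j ≤ x i) ∧ ∀ i : Fin M, x i ∈ Set.Icc a b},
      (Matrix.of fun i j : Fin M => φ i (x j)).det *
        (Matrix.of fun i j : Fin M => ψ i (x j)).det * ∏ k : Fin M, ξ (x k))
    = (Matrix.of fun i j : Fin M => ∫ x in Set.Icc a b, φ i x * ψ j x * ξ x).det := by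
  set μ := volume.restrict (Set.Icc a b)
  have hcube : volume.restrict (Set.univ.pi fun _ : Fin M => Set.Icc a b)
      = Measure.pi fun _ => μ := by
    rw [volume_pi, Measure.restrict_pi_pi]
  have hregion : {x : Fin M → ℝ | (∀ i j, i ≤ j → x j ≤ x i) ∧ ∀ i, x i ∈ Set.Icc a b}
      = {x | Antitone x} ∩ Set.univ.pi fun _ => Set.Icc a b := by
    ext x
    simp only [Set.mem_inter_iff, Set.mem_univ_pi]
    rfl
  have hint : ∀ i j, Integrable (fun t => φ i t * (ξ t * ψ j t)) μ := fun i j =>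
    (hInt i j).congr (ae_of_all _ fun t => by ring)
  have hdet : ∀ x : Fin M → ℝ,
      (of fun i j => φ i (x j)).det * (of fun i j => ψ i (x j)).det * ∏ k, ξ (x k)
        = (of fun i j => φ i (x j)).det * (of fun i j => ξ (x j) * ψ i (x j)).det := by
    intro x
    rw [mul_assoc, mul_comm _ (∏ k, _), ← det_mul_row]
    rfl
  have hinj : ∀ᵐ x ∂(Measure.pi fun _ : Fin M => μ), Injective x := by
    rw [← hcube]
    exact ae_restrict_of_ae ae_injective_volume
  rw [hregion, ← Measure.restrict_restrict measurableSet_setOf_antitone, hcube]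
  simp_rw [hdet]
  refine nsmul_right_injective M.factorial_ne_zero ?_
  dsimp only
  rw [← integral_eq_factorial_smul_setIntegral_antitone hinj (integrable_det_mul_det hint)
      fun σ x => det_mul_det_comp_perm φ (fun i t => ξ t * ψ i t) x σ,
    integral_det_mul_det hint]
  simp only [Fintype.card_fin, ← mul_assoc, mul_right_comm (φ _ _) (ξ _)]

/-- Andréief-type identity (square case `N = M`): the integral of
`det Φ(x) ⬝ det Ψ(x) ⬝ Π_k ξ(x_k)` over the ordered region
`b ≥ x_1 ≥ ⋯ ≥ x_M ≥ a` equals the determinant of the matrix of one-dimensional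
integrals `b_{i,j} = ∫_a^b φ_i(x) ψ_j(x) ξ(x) dx`. -/
theorem stmt_8 {M : ℕ} (hM : 1 ≤ M) {a b : ℝ} (hab : a ≤ b)
    (φ ψ : Fin M → ℝ → ℂ) (ξ : ℝ → ℂ)
    (hφ : ∀ i, Measurable (φ i)) (hψ : ∀ j, Measurable (ψ j)) (hξ : Measurable ξ)
    (hInt : ∀ i j : Fin M,
      IntegrableOn (fun x => φ i x * ψ j x * ξ x) (Set.Icc a b)) :
    (∫ x : Fin M → ℝ in
        {x | (∀ i j : Fin M, i ≤ j → x j ≤ x i) ∧ ∀ i : Fin M, x i ∈ Set.Icc a b},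
      (Matrix.of fun i j : Fin M => φ i (x j)).det *
        (Matrix.of fun i j : Fin M => ψ i (x j)).det * ∏ k : Fin M, ξ (x k))
    = (Matrix.of fun i j : Fin M => ∫ x in Set.Icc a b, φ i x * ψ j x * ξ x).det :=
  stmt_8_general φ ψ ξ hInt
end

section
/- Under the matrix setup below, fix 1 ≤ L ≤ M and reals x_1,…,x_L ∈ [α,β]. Then the (M−L)-fold integral ∫_{[α,β]^{M−L}} det Φ(x) · det Ψ(x) · Π_{k=1}^M ξ(x_k) dx_{L+1}⋯dx_M (with x_1,…,x_L held fixed) equals T(A), where A is the N×N×N tensor with entries: a_{i,j,k} = ς_i(x_k) ψ_j(x_k) for 1 ≤ k ≤ L; a_{i,j,k} = ∫_α^β ς_i(x) ψ_j(x) dx for L < k ≤ M; a_{i,j,k} = 0 for k > M and i < k; and a_{i,j,k} = ψ̄_{j,k} for k > M and i ≥ k. (When (K/M!)·det Φ·det Ψ·Π ξ is the joint density of M unordered exchangeable random variables, this gives the joint marginal density of L of them as (K/M!)·T(A).) -/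
open MeasureTheory

/-- Embedding with the first `L` coordinates fixed at `t_1, …, t_L` and the
remaining `M - L` coordinates free. -/
def embU {M L : ℕ} (t : Fin L → ℝ) (y : {m : Fin M // L ≤ (m : ℕ)} → ℝ)
    (m : Fin M) : ℝ :=
  if h : (m : ℕ) < L then t ⟨m, h⟩ else y ⟨m, le_of_not_gt h⟩

/-! Write `U` for the `N × N` matrix whose first `M` columns are `(ς_i(x_k))_i` and whose
remaining columns are `U_{ik} = [i ≥ k]`. The tensor of the integrand is then `U_{ik} Ψ_{jk}`,
a tensor of this shape has `T(u_{ik} v_{jk}) = det u · det v`, and expanding along the last `N - M`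
columns (zero above the diagonal, one on it) gives `det U = det Φ · ∏ ξ(x_k)`. Each term of the
pseudo-determinant is a product of factors depending on one coordinate each, so by Fubini the
integral over a free coordinate `x_k` simply replaces `ς_i(x_k) ψ_j(x_k)` by its integral over
`[α, β]`. -/

open Finset

theorem Matrix.det_eq_det_submatrix_castLE {R : Type*} [CommRing R] {M N : ℕ} (hMN : M ≤ N)
    (U : Matrix (Fin N) (Fin N) R) (hzero : ∀ i k : Fin N, M ≤ (k : ℕ) → i < k → U i k = 0)
    (hone : ∀ k : Fin N, M ≤ (k : ℕ) → U k k = 1) :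
    U.det = (U.submatrix (Fin.castLE hMN) (Fin.castLE hMN)).det := by
  induction N, hMN using Nat.le_induction with
  | base => rfl
  | succ N hMN ih =>
    have hlast : U.det = (U.submatrix Fin.castSucc Fin.castSucc).det := by
      have hM : M ≤ ((Fin.last N : Fin (N + 1)) : ℕ) := by simpa using hMN
      rw [Matrix.det_succ_column U (Fin.last N), sum_eq_single (Fin.last N)]
      · simp [hone _ hM]
      · intro i _ hi
        simp [hzero i _ hM (Fin.lt_last_iff_ne_last.2 hi)]
      · simp
    rw [hlast, ih (U.submatrix Fin.castSucc Fin.castSucc) (fun i k hk hik => hzero _ _ hk hik)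
      (fun k hk => hone _ hk), Matrix.submatrix_submatrix]
    rfl

theorem pseudoDet_of_mul_eq_det_mul_det {N : ℕ} (u v : Matrix (Fin N) (Fin N) ℂ) :
    pseudoDet (fun i j k => u i k * v j k) = u.det * v.det := by
  simp only [pseudoDet, Matrix.det_apply', sum_mul_sum, prod_mul_distrib]
  exact sum_congr rfl fun μ _ => sum_congr rfl fun σ _ => by ring

theorem det_PhiMat_mul_det_PsiMat_mul_prod_eq_pseudoDet {M N : ℕ} (hMN : M ≤ N)
    (φ : Fin M → ℝ → ℂ) (ψ : Fin N → ℝ → ℂ) (ξ : ℝ → ℂ) (ψbar : Fin N → Fin N → ℂ) (x : Fin M → ℝ) :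
    (PhiMat φ x).det * (PsiMat ψ ψbar x).det * ∏ k, ξ (x k)
      = pseudoDet (fun i j k =>
          if hk : (k : ℕ) < M then varsigma φ ξ i (x ⟨k, hk⟩) * ψ j (x ⟨k, hk⟩)
          else if (i : ℕ) < (k : ℕ) then 0 else ψbar j k) := by
  let U : Matrix (Fin N) (Fin N) ℂ := Matrix.of fun i k =>
    if hk : (k : ℕ) < M then varsigma φ ξ i (x ⟨k, hk⟩) else if i < k then 0 else 1
  have hdetU : U.det = (PhiMat φ x).det * ∏ k, ξ (x k) := by
    rw [Matrix.det_eq_det_submatrix_castLE hMN U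
        (fun i k hk hik => by simp [U, hk.not_gt, hik])
        (fun k hk => by simp [U, hk.not_gt]),
      mul_comm, ← Matrix.det_mul_row]
    congr 1
    ext i m
    simp [U, varsigma, PhiMat, mul_comm]
  have hfactor : (fun i j k : Fin N =>
      if hk : (k : ℕ) < M then varsigma φ ξ i (x ⟨k, hk⟩) * ψ j (x ⟨k, hk⟩)
      else if (i : ℕ) < (k : ℕ) then 0 else ψbar j k)
      = fun i j k => U i k * PsiMat ψ ψbar x j k := by
    ext i j k
    by_cases hk : (k : ℕ) < M
    · simp [U, PsiMat, hk]
    · by_cases hik : i < k <;> simp [U, PsiMat, hk, hik]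
  rw [hfactor, pseudoDet_of_mul_eq_det_mul_det, hdetU]
  ring

section Fubini

variable {ι E 𝕜 : Type*} [Fintype ι] [MeasureSpace E] [SigmaFinite (volume : Measure E)]
  [RCLike 𝕜]

theorem setIntegral_univ_pi_prod (s : ι → Set E) (f : ι → E → 𝕜) :
    ∫ y in Set.univ.pi s, ∏ i, f i (y i) = ∏ i, ∫ x in s i, f i x := by
  rw [volume_pi, Measure.restrict_pi_pi]
  exact integral_fintype_prod_eq_prod f

theorem integrableOn_univ_pi_prod {s : ι → Set E} {f : ι → E → 𝕜}
    (hf : ∀ i, IntegrableOn (f i) (s i)) :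
    IntegrableOn (fun y : ι → E => ∏ i, f i (y i)) (Set.univ.pi s) := by
  rw [IntegrableOn, volume_pi, Measure.restrict_pi_pi]
  exact Integrable.fintype_prod hf

end Fubini

section Marginal

variable {M N L : ℕ}

def freeCoord (hMN : M ≤ N) : {m : Fin M // L ≤ (m : ℕ)} ↪ Fin N :=
  ⟨fun b => Fin.castLE hMN b.1, fun _ _ h => Subtype.ext (Fin.castLE_injective hMN h)⟩

@[simp]
theorem val_freeCoord (hMN : M ≤ N) (b : {m : Fin M // L ≤ (m : ℕ)}) :
    (freeCoord hMN b : ℕ) = b.1 :=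
  rfl

theorem prod_eq_prod_freeCoord_mul (hMN : M ≤ N) (F : Fin N → ℂ) :
    ∏ k, F k = (∏ b, F (freeCoord (L := L) hMN b)) *
      ∏ k ∈ univ.filter (fun k : Fin N => ¬(L ≤ (k : ℕ) ∧ (k : ℕ) < M)), F k := by
  have hmap : univ.map (freeCoord (L := L) hMN)
      = univ.filter (fun k : Fin N => L ≤ (k : ℕ) ∧ (k : ℕ) < M) := by
    ext k
    simp only [mem_map, mem_univ, true_and, mem_filter]
    constructor
    · rintro ⟨b, -, rfl⟩
      exact ⟨b.2, b.1.2⟩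
    · rintro ⟨hLk, hkM⟩
      exact ⟨⟨⟨k, hkM⟩, hLk⟩, Fin.ext rfl⟩
  rw [← prod_map, hmap, prod_filter_mul_prod_filter_not]

theorem prod_embU_eq (hLM : L ≤ M) (hMN : M ≤ N) (g : Fin N → ℝ → ℂ) (c : Fin N → ℂ)
    (t : Fin L → ℝ) (y : {m : Fin M // L ≤ (m : ℕ)} → ℝ) :
    ∏ k : Fin N, (if hk : (k : ℕ) < M then g k (embU t y ⟨k, hk⟩) else c k)
      = (∏ b, g (freeCoord hMN b) (y b)) *
        ∏ k ∈ univ.filter (fun k : Fin N => ¬(L ≤ (k : ℕ) ∧ (k : ℕ) < M)),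
          (if hk : (k : ℕ) < L then g k (t ⟨k, hk⟩) else c k) := by
  rw [prod_eq_prod_freeCoord_mul hMN]
  congr 1
  · refine prod_congr rfl fun b _ => ?_
    simp [embU, b.2.not_gt]
  · refine prod_congr rfl fun k hk => ?_
    rw [mem_filter, not_and_or, not_le, not_lt] at hk
    rcases hk.2 with hkL | hMk
    · simp [embU, hkL, hkL.trans_le hLM]
    · simp [hMk.not_gt, (hLM.trans hMk).not_gt]

theorem integrableOn_prod_embU (hLM : L ≤ M) (hMN : M ≤ N) {s : Set ℝ} {g : Fin N → ℝ → ℂ}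
    (hg : ∀ k, IntegrableOn (g k) s) (c : Fin N → ℂ) (t : Fin L → ℝ) :
    IntegrableOn
      (fun y => ∏ k : Fin N, (if hk : (k : ℕ) < M then g k (embU t y ⟨k, hk⟩) else c k))
      (Set.univ.pi fun _ : {m : Fin M // L ≤ (m : ℕ)} => s) := by
  simp_rw [prod_embU_eq hLM hMN]
  exact (integrableOn_univ_pi_prod fun b => hg _).mul_const _

theorem setIntegral_prod_embU (hLM : L ≤ M) (hMN : M ≤ N) (s : Set ℝ) (g : Fin N → ℝ → ℂ)
    (c : Fin N → ℂ) (t : Fin L → ℝ) :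
    ∫ y in Set.univ.pi (fun _ : {m : Fin M // L ≤ (m : ℕ)} => s),
        ∏ k : Fin N, (if hk : (k : ℕ) < M then g k (embU t y ⟨k, hk⟩) else c k)
      = ∏ k : Fin N, (if hk : (k : ℕ) < L then g k (t ⟨k, hk⟩)
          else if (k : ℕ) < M then ∫ x in s, g k x else c k) := by
  simp_rw [prod_embU_eq hLM hMN]
  rw [integral_mul_const, setIntegral_univ_pi_prod, prod_eq_prod_freeCoord_mul hMN]
  congr 1
  · refine prod_congr rfl fun b _ => ?_
    simp [b.2.not_gt, b.1.2]
  · refine prod_congr rfl fun k hk => ?_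
    rw [mem_filter, not_and_or, not_le, not_lt] at hk
    rcases hk.2 with hkL | hMk
    · simp [hkL]
    · simp [hMk.not_gt, (hLM.trans hMk).not_gt]

theorem setIntegral_pseudoDet_embU (hLM : L ≤ M) (hMN : M ≤ N) (s : Set ℝ)
    (g : Fin N → Fin N → ℝ → ℂ) (hg : ∀ i j, IntegrableOn (g i j) s)
    (c : Fin N → Fin N → Fin N → ℂ) (t : Fin L → ℝ) :
    ∫ y in Set.univ.pi (fun _ : {m : Fin M // L ≤ (m : ℕ)} => s),
        pseudoDet (fun i j k => if hk : (k : ℕ) < M then g i j (embU t y ⟨k, hk⟩) else c i j k)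
      = pseudoDet (fun i j k => if hk : (k : ℕ) < L then g i j (t ⟨k, hk⟩)
          else if (k : ℕ) < M then ∫ x in s, g i j x else c i j k) := by
  have hint (μ σ : Equiv.Perm (Fin N)) := integrableOn_prod_embU hLM hMN
    (fun k => hg (μ k) (σ k)) (fun k => c (μ k) (σ k) k) t
  simp only [pseudoDet]
  rw [integral_finsetSum _ fun μ _ => integrable_finsetSum _ fun σ _ => (hint μ σ).const_mul _]
  refine sum_congr rfl fun μ _ => ?_
  rw [integral_finsetSum _ fun σ _ => (hint μ σ).const_mul _]
  refine sum_congr rfl fun σ _ => ?_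
  rw [integral_const_mul]
  exact congrArg _ (setIntegral_prod_embU hLM hMN s _ _ t)

end Marginal

theorem stmt_9_general {M N L : ℕ} (hLM : L ≤ M) (hMN : M ≤ N)
    {α β : ℝ}
    (φ : Fin M → ℝ → ℂ) (ψ : Fin N → ℝ → ℂ) (ξ : ℝ → ℂ) (ψbar : Fin N → Fin N → ℂ)
    (hInt : ∀ (i j : Fin N),
      IntegrableOn (fun x => varsigma φ ξ i x * ψ j x) (Set.Icc α β))
    (t : Fin L → ℝ) :
    (∫ y : {m : Fin M // L ≤ (m : ℕ)} → ℝ in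
        Set.univ.pi fun _ : {m : Fin M // L ≤ (m : ℕ)} => Set.Icc α β,
      (PhiMat φ (embU t y)).det * (PsiMat ψ ψbar (embU t y)).det *
        ∏ k : Fin M, ξ (embU t y k))
    = pseudoDet (fun i j k =>
        if hk : (k : ℕ) < L then varsigma φ ξ i (t ⟨k, hk⟩) * ψ j (t ⟨k, hk⟩)
        else if (k : ℕ) < M then ∫ x in Set.Icc α β, varsigma φ ξ i x * ψ j x
        else if (i : ℕ) < (k : ℕ) then 0 else ψbar j k) := by
  simp_rw [det_PhiMat_mul_det_PsiMat_mul_prod_eq_pseudoDet hMN]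
  exact setIntegral_pseudoDet_embU hLM hMN (Set.Icc α β) (fun i j x => varsigma φ ξ i x * ψ j x)
    hInt (fun i j k => if (i : ℕ) < (k : ℕ) then 0 else ψbar j k) t

/-- Unordered case, joint marginal of `L` eigenvalues: the `(M-L)`-fold integral of
`det Φ ⬝ det Ψ ⬝ Π ξ` over `[α,β]^{M-L}` with the first `L` coordinates held
fixed equals `T(A)`. -/
theorem stmt_9 {M N L : ℕ} (hL : 1 ≤ L) (hLM : L ≤ M) (hMN : M ≤ N)
    {α β : ℝ} (hαβ : α < β)
    (φ : Fin M → ℝ → ℂ) (ψ : Fin N → ℝ → ℂ) (ξ : ℝ → ℂ) (ψbar : Fin N → Fin N → ℂ)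
    (hφ : ∀ i, Measurable (φ i)) (hψ : ∀ j, Measurable (ψ j)) (hξ : Measurable ξ)
    (hInt : ∀ (i j : Fin N),
      IntegrableOn (fun x => varsigma φ ξ i x * ψ j x) (Set.Icc α β))
    (t : Fin L → ℝ) (htmem : ∀ ℓ, t ℓ ∈ Set.Icc α β) :
    (∫ y : {m : Fin M // L ≤ (m : ℕ)} → ℝ in
        Set.univ.pi fun _ : {m : Fin M // L ≤ (m : ℕ)} => Set.Icc α β,
      (PhiMat φ (embU t y)).det * (PsiMat ψ ψbar (embU t y)).det *
        ∏ k : Fin M, ξ (embU t y k))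
    = pseudoDet (fun i j k =>
        if hk : (k : ℕ) < L then varsigma φ ξ i (t ⟨k, hk⟩) * ψ j (t ⟨k, hk⟩)
        else if (k : ℕ) < M then ∫ x in Set.Icc α β, varsigma φ ξ i x * ψ j x
        else if (i : ℕ) < (k : ℕ) then 0 else ψbar j k) :=
  stmt_9_general hLM hMN φ ψ ξ ψbar hInt t
end

section
/- Let n ≥ M ≥ 1 be integers. Then ∫_{x_1 ≥ x_2 ≥ ⋯ ≥ x_M ≥ 0} Π_{1≤i<j≤M} (x_i − x_j)^2 · Π_{i=1}^M x_i^{n−M} e^{−x_i} dx_1⋯dx_M = Π_{i=1}^M (n−i)! (M−i)!. (This is the normalizing constant of the joint eigenvalue density of a complex central uncorrelated Wishart matrix of dimension M with n degrees of freedom.) -/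
/-!
Write `V(x)` for the Vandermonde matrix, so the integrand is `det V(x)² · ∏ w(xᵢ)` with
`w(t) = t^(n-M) e^{-t}`. It is invariant under permuting the coordinates and vanishes off the
injective points, each of which has exactly one sorting permutation; hence the integral over the
orthant is `M!` times the integral over the ordered cone. Over the orthant, expanding both
determinants and integrating term by term (Heine's identity) gives `M!` times the Hankel
determinant `det [(n - M + i + j)!]` of the moments of `w`. Since `(a + j)! = a! · (a+1)^(j)`
with a monic rising factorial of degree `j`, this determinant is a row-scaled Vandermonde
determinant at consecutive integers, equal to `∏ᵢ i! (n - M + i)!`.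
-/

open Finset Matrix Polynomial Equiv MeasureTheory Set
open scoped Nat

theorem Matrix.det_vandermonde_natCast_eq_prod_factorial {R : Type*} [CommRing R] (M : ℕ) :
    (vandermonde fun i : Fin M => (i : R)).det = ∏ i : Fin M, ((i : ℕ)! : R) := by
  cases M with
  | zero => simp
  | succ p =>
    rw [det_vandermonde_id_eq_superFactorial, ← Nat.prod_range_succ_factorial,
      ← Fin.prod_univ_eq_prod_range]
    push_cast
    rfl

theorem Matrix.det_of_factorial_add_add {R : Type*} [CommRing R] [IsDomain R] (m M : ℕ) :
    (of fun i j : Fin M => ((m + i + j)! : R)).det = ∏ i : Fin M, ((i : ℕ)! * (m + i)! : R) := by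
  have hentry : ∀ i j : Fin M, ((m + i + j)! : R) =
      (m + i)! * (ascPochhammer R j).eval (((i : ℕ) : R) + (m + 1)) := by
    intro i j
    rw [← factorial_mul_ascPochhammer]
    push_cast
    ring_nf
  have hcol := det_mul_column (fun i : Fin M => ((m + i)! : R))
    (of fun i j : Fin M => (ascPochhammer R j).eval (((i : ℕ) : R) + (m + 1)))
  simp only [of_apply] at hcol
  simp_rw [hentry, hcol]
  rw [← det_eval_matrixOfPolynomials_eq_det_vandermonde _ _
      (fun j => ascPochhammer_natDegree _ _) (fun j => monic_ascPochhammer _ _),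
    det_vandermonde_add, det_vandermonde_natCast_eq_prod_factorial, prod_mul_distrib, mul_comm]

theorem Matrix.sum_perm_sum_perm_sign_mul_prod {n R : Type*} [Fintype n] [DecidableEq n]
    [CommRing R] (A : Matrix n n R) :
    ∑ σ : Perm n, ∑ τ : Perm n, ((Perm.sign σ : ℤ) : R) * (Perm.sign τ : ℤ) * ∏ i, A (σ i) (τ i) =
      (Fintype.card n)! * A.det := by
  have hrow : ∀ σ : Perm n, ∑ τ : Perm n, ((Perm.sign τ : ℤ) : R) * ∏ i, A (σ i) (τ i) =
      (Perm.sign σ : ℤ) * A.det := by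
    intro σ
    rw [← det_permute, ← det_transpose, det_apply']
    rfl
  simp_rw [mul_assoc, ← mul_sum, hrow, ← mul_assoc, ← Int.cast_mul, ← Units.val_mul,
    Int.units_mul_self, Units.val_one, Int.cast_one, one_mul]
  rw [sum_const, Finset.card_univ, Fintype.card_perm, nsmul_eq_mul]

theorem Matrix.det_vandermonde_sq_eq_sum {R : Type*} [CommRing R] {M : ℕ} (x : Fin M → R) :
    (vandermonde x).det ^ 2 = ∑ σ : Perm (Fin M), ∑ τ : Perm (Fin M),
      ((Perm.sign σ : ℤ) : R) * (Perm.sign τ : ℤ) * ∏ i, x i ^ ((σ i : ℕ) + τ i) := by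
  have hdet : (vandermonde x).det =
      ∑ σ : Perm (Fin M), ((Perm.sign σ : ℤ) : R) * ∏ i, x i ^ (σ i : ℕ) := by
    rw [← det_transpose, det_apply']
    rfl
  rw [sq, hdet, sum_mul_sum]
  refine sum_congr rfl fun σ _ => sum_congr rfl fun τ _ => ?_
  simp_rw [pow_add, prod_mul_distrib]
  ring

theorem Matrix.det_vandermonde_comp_perm_sq {R : Type*} [CommRing R] {M : ℕ} (x : Fin M → R)
    (σ : Perm (Fin M)) : (vandermonde (x ∘ σ)).det ^ 2 = (vandermonde x).det ^ 2 := by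
  rw [show vandermonde (x ∘ σ) = (vandermonde x).submatrix σ id from rfl, det_permute, mul_pow,
    ← Int.cast_pow, ← Units.val_pow_eq_pow_val, Int.units_sq, Units.val_one, Int.cast_one,
    one_mul]

theorem Matrix.prod_prod_Ioi_sub_sq_eq_det_vandermonde_sq {R : Type*} [CommRing R] {M : ℕ}
    (x : Fin M → R) : ∏ i : Fin M, ∏ j ∈ Ioi i, (x i - x j) ^ 2 = (vandermonde x).det ^ 2 := by
  rw [det_vandermonde, ← Finset.prod_pow]
  refine prod_congr rfl fun i _ => ?_
  rw [← Finset.prod_pow]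
  exact prod_congr rfl fun j _ => by ring

section Symmetrization

theorem exists_perm_antitone_comp {α : Type*} [LinearOrder α] {M : ℕ} (x : Fin M → α) :
    ∃ σ : Perm (Fin M), Antitone (x ∘ σ) :=
  ⟨Tuple.sort (OrderDual.toDual ∘ x), Tuple.monotone_sort (OrderDual.toDual ∘ x)⟩

theorem perm_eq_of_antitone_comp {α : Type*} [PartialOrder α] {M : ℕ} {x : Fin M → α}
    (hx : Function.Injective x) {σ τ : Perm (Fin M)} (hσ : Antitone (x ∘ σ))
    (hτ : Antitone (x ∘ τ)) : σ = τ :=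
  Equiv.coe_fn_injective (hx.comp_left (Tuple.unique_antitone hσ hτ))

variable {M : ℕ} {ν : Measure ℝ} [SigmaFinite ν] {f : (Fin M → ℝ) → ℝ}

theorem sum_perm_indicator_antitone_comp (hf : ∀ x, ¬ Function.Injective x → f x = 0)
    (x : Fin M → ℝ) : ∑ σ : Perm (Fin M), {y | Antitone (y ∘ σ)}.indicator f x = f x := by
  by_cases hx : Function.Injective x
  · obtain ⟨σ₀, hσ₀⟩ := exists_perm_antitone_comp x
    rw [sum_eq_single σ₀ (fun σ _ hσ => indicator_of_notMem
      (fun h => hσ (perm_eq_of_antitone_comp hx h hσ₀)) f)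
      (fun h => absurd (Finset.mem_univ σ₀) h), indicator_of_mem hσ₀]
  · simp [indicator_apply, hf x hx]

theorem measurableSet_setOf_antitone_comp (σ : Perm (Fin M)) :
    MeasurableSet {x : Fin M → ℝ | Antitone (x ∘ σ)} :=
  (isClosed_antitone.preimage (f := fun x : Fin M → ℝ => x ∘ σ) (by fun_prop)).measurableSet

theorem setIntegral_antitone_comp_perm (hsymm : ∀ (σ : Perm (Fin M)) x, f (x ∘ σ) = f x)
    (σ : Perm (Fin M)) :
    ∫ x in {y | Antitone (y ∘ σ)}, f x ∂Measure.pi (fun _ => ν) =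
      ∫ x in {y | Antitone y}, f x ∂Measure.pi (fun _ => ν) := by
  have he := measurePreserving_piCongrLeft (fun _ : Fin M => ν) σ.symm
  have happly : ∀ x, MeasurableEquiv.piCongrLeft (fun _ => ℝ) σ.symm x = x ∘ σ := by
    intro x
    funext i
    simpa using MeasurableEquiv.piCongrLeft_apply_apply (β := fun _ => ℝ) σ.symm x (σ i)
  rw [← he.setIntegral_preimage_emb (MeasurableEquiv.measurableEmbedding _) f {y | Antitone y}]
  simp only [preimage_ofPred_eq, happly, hsymm]

theorem integral_eq_factorial_mul_setIntegral_antitone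
    (hf : Integrable f (Measure.pi fun _ => ν))
    (hsymm : ∀ (σ : Perm (Fin M)) x, f (x ∘ σ) = f x)
    (hzero : ∀ x, ¬ Function.Injective x → f x = 0) :
    ∫ x, f x ∂Measure.pi (fun _ => ν) =
      M ! * ∫ x in {x | Antitone x}, f x ∂Measure.pi (fun _ => ν) := by
  calc ∫ x, f x ∂Measure.pi (fun _ => ν)
      = ∫ x, ∑ σ : Perm (Fin M), {y | Antitone (y ∘ σ)}.indicator f x
          ∂Measure.pi (fun _ => ν) := by simp_rw [sum_perm_indicator_antitone_comp hzero]
    _ = ∑ σ : Perm (Fin M), ∫ x in {y | Antitone (y ∘ σ)}, f x ∂Measure.pi (fun _ => ν) := by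
      rw [integral_finsetSum _ fun σ _ =>
        (integrable_indicator_iff (measurableSet_setOf_antitone_comp σ)).2 hf.integrableOn]
      simp_rw [integral_indicator (measurableSet_setOf_antitone_comp _)]
    _ = M ! * ∫ x in {x | Antitone x}, f x ∂Measure.pi (fun _ => ν) := by
      simp_rw [setIntegral_antitone_comp_perm hsymm]
      rw [sum_const, Finset.card_univ, Fintype.card_perm, Fintype.card_fin, nsmul_eq_mul]

end Symmetrization

section Heine

variable {M : ℕ} {ν : Measure ℝ} [SigmaFinite ν] {w : ℝ → ℝ}

theorem det_vandermonde_sq_mul_prod_eq_sum (x : Fin M → ℝ) :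
    (vandermonde x).det ^ 2 * ∏ i, w (x i) = ∑ σ : Perm (Fin M), ∑ τ : Perm (Fin M),
      ((Perm.sign σ : ℤ) : ℝ) * (Perm.sign τ : ℤ) * ∏ i, (x i ^ ((σ i : ℕ) + τ i) * w (x i)) := by
  simp_rw [det_vandermonde_sq_eq_sum, sum_mul, prod_mul_distrib, mul_assoc]

theorem det_vandermonde_sq_mul_prod_comp_perm (σ : Perm (Fin M)) (x : Fin M → ℝ) :
    (vandermonde (x ∘ σ)).det ^ 2 * ∏ i, w ((x ∘ σ) i) =
      (vandermonde x).det ^ 2 * ∏ i, w (x i) := by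
  rw [det_vandermonde_comp_perm_sq]
  exact congrArg _ (Equiv.prod_comp σ fun i => w (x i))

theorem det_vandermonde_sq_mul_prod_of_not_injective {x : Fin M → ℝ}
    (hx : ¬ Function.Injective x) : (vandermonde x).det ^ 2 * ∏ i, w (x i) = 0 := by
  obtain ⟨i, j, hij, hne⟩ : ∃ i j, x i = x j ∧ i ≠ j := by
    simpa [Function.Injective] using hx
  rw [det_vandermonde_eq_zero_iff.2 ⟨i, j, hij, hne⟩]
  ring

theorem integrable_det_vandermonde_sq_mul_prod
    (hw : ∀ k : ℕ, Integrable (fun t => t ^ k * w t) ν) :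
    Integrable (fun x : Fin M → ℝ => (vandermonde x).det ^ 2 * ∏ i, w (x i))
      (Measure.pi fun _ => ν) := by
  simp_rw [det_vandermonde_sq_mul_prod_eq_sum]
  exact integrable_finsetSum _ fun σ _ => integrable_finsetSum _ fun τ _ =>
    (Integrable.fintype_prod (f := fun i t => t ^ ((σ i : ℕ) + τ i) * w t)
      fun i => hw _).const_mul _

theorem integral_det_vandermonde_sq_mul_prod
    (hw : ∀ k : ℕ, Integrable (fun t => t ^ k * w t) ν) :
    ∫ x, (vandermonde x).det ^ 2 * ∏ i, w (x i) ∂Measure.pi (fun _ : Fin M => ν) =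
      M ! * (of fun i j : Fin M => ∫ t, t ^ ((i : ℕ) + j) * w t ∂ν).det := by
  have hint : ∀ k : Fin M → ℕ,
      Integrable (fun x : Fin M → ℝ => ∏ i, (x i ^ k i * w (x i))) (Measure.pi fun _ => ν) :=
    fun k => Integrable.fintype_prod (f := fun i t => t ^ k i * w t) fun i => hw (k i)
  calc ∫ x, (vandermonde x).det ^ 2 * ∏ i, w (x i) ∂Measure.pi (fun _ : Fin M => ν)
      = ∑ σ : Perm (Fin M), ∑ τ : Perm (Fin M), ((Perm.sign σ : ℤ) : ℝ) * (Perm.sign τ : ℤ) *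
          ∫ x, ∏ i, (x i ^ ((σ i : ℕ) + τ i) * w (x i)) ∂Measure.pi (fun _ => ν) := by
        simp_rw [det_vandermonde_sq_mul_prod_eq_sum]
        rw [integral_finsetSum _ fun σ _ => integrable_finsetSum _ fun τ _ =>
          (hint _).const_mul _]
        refine sum_congr rfl fun σ _ => ?_
        rw [integral_finsetSum _ fun τ _ => (hint _).const_mul _]
        simp_rw [integral_const_mul]
    _ = M ! * (of fun i j : Fin M => ∫ t, t ^ ((i : ℕ) + j) * w t ∂ν).det := by
        have hdet := sum_perm_sum_perm_sign_mul_prod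
          (of fun i j : Fin M => ∫ t, t ^ ((i : ℕ) + j) * w t ∂ν)
        rw [Fintype.card_fin] at hdet
        rw [← hdet]
        simp_rw [of_apply, ← integral_fintype_prod_eq_prod]

theorem setIntegral_antitone_det_vandermonde_sq_mul_prod
    (hw : ∀ k : ℕ, Integrable (fun t => t ^ k * w t) ν) :
    ∫ x in {x | Antitone x}, (vandermonde x).det ^ 2 * ∏ i, w (x i)
      ∂Measure.pi (fun _ : Fin M => ν) =
      (of fun i j : Fin M => ∫ t, t ^ ((i : ℕ) + j) * w t ∂ν).det := by
  refine mul_left_cancel₀ (a := (M ! : ℝ)) (by positivity) ?_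
  rw [← integral_eq_factorial_mul_setIntegral_antitone (integrable_det_vandermonde_sq_mul_prod hw)
    det_vandermonde_sq_mul_prod_comp_perm fun _ => det_vandermonde_sq_mul_prod_of_not_injective]
  exact integral_det_vandermonde_sq_mul_prod hw

end Heine

theorem integrableOn_pow_mul_exp_neg_Ici (k : ℕ) :
    IntegrableOn (fun t : ℝ => t ^ k * Real.exp (-t)) (Ici 0) := by
  rw [integrableOn_Ici_iff_integrableOn_Ioi]
  refine (Real.GammaIntegral_convergent (s := (k : ℝ) + 1) (by positivity)).congr_fun
    (fun t _ => ?_) measurableSet_Ioi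
  simp only [add_sub_cancel_right, Real.rpow_natCast]
  ring

theorem integral_pow_mul_exp_neg_Ici (k : ℕ) :
    ∫ t in Ici (0 : ℝ), t ^ k * Real.exp (-t) = k ! := by
  rw [integral_Ici_eq_integral_Ioi, ← Real.Gamma_nat_eq_factorial,
    Real.Gamma_eq_integral (by positivity)]
  refine setIntegral_congr_fun measurableSet_Ioi fun t _ => ?_
  simp only [add_sub_cancel_right, Real.rpow_natCast]
  ring

theorem setIntegral_antitone_det_vandermonde_sq_mul_prod_pow_mul_exp_neg (m M : ℕ) :
    ∫ x in {x | Antitone x}, (vandermonde x).det ^ 2 * ∏ i, (x i ^ m * Real.exp (-x i))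
      ∂Measure.pi (fun _ : Fin M => volume.restrict (Ici 0)) =
      ∏ i : Fin M, ((i : ℕ)! * (m + i)! : ℝ) := by
  have hmul : ∀ k t, t ^ k * (t ^ m * Real.exp (-t)) = t ^ (m + k) * Real.exp (-t) := by
    intro k t
    ring
  rw [setIntegral_antitone_det_vandermonde_sq_mul_prod (w := fun t => t ^ m * Real.exp (-t))
    fun k => by simpa only [hmul, IntegrableOn] using integrableOn_pow_mul_exp_neg_Ici (m + k)]
  simp_rw [hmul, integral_pow_mul_exp_neg_Ici, ← add_assoc]
  exact det_of_factorial_add_add m M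

theorem prod_factorial_sub_mul_factorial_sub {M n : ℕ} (hMn : M ≤ n) :
    ∏ i : Fin M, (((n - ((i : ℕ) + 1))! * (M - ((i : ℕ) + 1))! : ℕ) : ℝ) =
      ∏ i : Fin M, ((i : ℕ)! * (n - M + i)! : ℝ) := by
  refine (Fintype.prod_equiv Fin.revPerm _ _ fun i => ?_).symm
  have hi := i.isLt
  rw [Fin.revPerm_apply, Fin.val_rev, show n - (M - (i + 1) + 1) = n - M + i by omega,
    show M - (M - (i + 1) + 1) = i by omega]
  push_cast
  ring

theorem stmt_11_general {M n : ℕ} (hMn : M ≤ n) :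
    (∫ x : Fin M → ℝ in
        {x | (∀ i j : Fin M, i ≤ j → x j ≤ x i) ∧ ∀ i : Fin M, 0 ≤ x i},
      (∏ i : Fin M, ∏ j ∈ Finset.Ioi i, (x i - x j) ^ 2) *
        ∏ i : Fin M, x i ^ (n - M) * Real.exp (-x i))
    = ∏ i : Fin M,
        (((n - ((i : ℕ) + 1)).factorial * (M - ((i : ℕ) + 1)).factorial : ℕ) : ℝ) := by
  have hcone : {x : Fin M → ℝ | (∀ i j : Fin M, i ≤ j → x j ≤ x i) ∧ ∀ i : Fin M, 0 ≤ x i} =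
      {x | Antitone x} ∩ univ.pi fun _ => Ici 0 := by
    ext x
    simp [Antitone, Pi.le_def]
  rw [hcone, ← Measure.restrict_restrict isClosed_antitone.measurableSet, volume_pi,
    Measure.restrict_pi_pi]
  simp_rw [prod_prod_Ioi_sub_sq_eq_det_vandermonde_sq]
  rw [setIntegral_antitone_det_vandermonde_sq_mul_prod_pow_mul_exp_neg,
    prod_factorial_sub_mul_factorial_sub hMn]

/-- Normalizing constant of the joint eigenvalue density of a complex central
uncorrelated Wishart matrix: the integral of the squared Vandermonde determinant
times `Π_i x_i^{n-M} e^{-x_i}` over the ordered cone `x_1 ≥ ⋯ ≥ x_M ≥ 0`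
equals `Π_{i=1}^M (n-i)! (M-i)!`. -/
theorem stmt_11 {M n : ℕ} (hM : 1 ≤ M) (hMn : M ≤ n) :
    (∫ x : Fin M → ℝ in
        {x | (∀ i j : Fin M, i ≤ j → x j ≤ x i) ∧ ∀ i : Fin M, 0 ≤ x i},
      (∏ i : Fin M, ∏ j ∈ Finset.Ioi i, (x i - x j) ^ 2) *
        ∏ i : Fin M, x i ^ (n - M) * Real.exp (-x i))
    = ∏ i : Fin M,
        (((n - ((i : ℕ) + 1)).factorial * (M - ((i : ℕ) + 1)).factorial : ℕ) : ℝ) :=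
  stmt_11_general hMn
end

section
/- Let M ≥ 1 be an integer. Then ∫_{x_1 ≥ x_2 ≥ ⋯ ≥ x_M, x ∈ ℝ^M} Π_{1≤i<j≤M} (x_i − x_j)^2 · Π_{i=1}^M e^{−x_i^2} dx_1⋯dx_M = 2^{−M(M−1)/2} · π^{M/2} · Π_{i=1}^M (i−1)!. (This is the normalizing constant of the joint eigenvalue density of the Gaussian unitary ensemble: the GUE consists of complex Hermitian M×M random matrices with i.i.d. complex Gaussian entries of variance 1/2 above the diagonal and real Gaussian entries of variance 1/2 on the diagonal, whose ordered eigenvalues have joint density proportional to Π_{i<j}(x_i − x_j)^2 Π_i e^{−x_i^2}.) -/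
open MeasureTheory Polynomial Real Matrix Finset Equiv
open scoped Nat

/-!
The probabilists' Hermite polynomials `He_k` are monic and orthogonal for the weight
`e^{-x²/2}`, with `∫ He_k² e^{-x²/2} = k! √(2π)` (integrate by parts, using
`(He_k e^{-x²/2})' = -He_{k+1} e^{-x²/2}` and `He_{k+1}' = (k+1) He_k`). After the substitution
`x ↦ √2 x` the functions `He_k(√2 x)` are orthogonal for `e^{-x²}` with squared norms `k! √π`.
Column operations turn the matrix `(He_i(√2 x_j))` into the Vandermonde matrix of `√2 x`, whose
determinant is `√2 ^ (M choose 2)` times that of `x`. Expanding the squared determinant as a double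
sum over permutations and integrating coordinate by coordinate, only the diagonal terms survive, so
`∫_{ℝ^M} V(x)² ∏ e^{-x_i²} = M! ∏ k! √π / 2 ^ (M choose 2)`. The integrand is symmetric, and the
chambers `{x | x ∘ σ antitone}` cover `ℝ^M` and overlap only on the null set where two coordinates
agree, so the integral over the ordered chamber is `1 / M!` of the total.
-/

namespace Polynomial

theorem derivative_hermite_succ (n : ℕ) :
    derivative (hermite (n + 1)) = (n + 1 : ℤ[X]) * hermite n := by
  induction n with
  | zero => simp
  | succ n ih =>
    rw [hermite_succ (n + 1), derivative_sub, derivative_mul, derivative_X, one_mul, ih,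
      derivative_mul]
    simp only [derivative_add, derivative_natCast, derivative_one, add_zero, zero_mul, zero_add]
    push_cast
    linear_combination (-(n + 1 : ℤ[X])) * hermite_succ n

end Polynomial

theorem integrable_aeval_mul_exp_neg_mul_sq {R : Type*} [CommSemiring R] [Algebra R ℝ] {b : ℝ}
    (hb : 0 < b) (p : R[X]) : Integrable fun x : ℝ => aeval x p * exp (-b * x ^ 2) := by
  induction p using Polynomial.induction_on' with
  | add p q hp hq =>
    simp only [map_add, add_mul]
    exact hp.add hq
  | monomial n a =>
    have h := integrable_rpow_mul_exp_neg_mul_sq hb (s := n) (by linarith [n.cast_nonneg (α := ℝ)])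
    simp only [Real.rpow_natCast] at h
    simpa only [aeval_monomial, mul_assoc] using h.const_mul (algebraMap R ℝ a)

theorem integrable_aeval_mul_gaussian (p : ℤ[X]) :
    Integrable fun x : ℝ => aeval x p * exp (-(x ^ 2 / 2)) := by
  simpa only [neg_div, div_eq_inv_mul, neg_mul] using
    integrable_aeval_mul_exp_neg_mul_sq (b := 2⁻¹) (by norm_num) p

theorem hasDerivAt_aeval_hermite_mul_gaussian (n : ℕ) (x : ℝ) :
    HasDerivAt (fun y => aeval y (hermite n) * exp (-(y ^ 2 / 2)))
      (-(aeval x (hermite (n + 1)) * exp (-(x ^ 2 / 2)))) x := by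
  have hG : HasDerivAt (fun y : ℝ => exp (-(y ^ 2 / 2))) (exp (-(x ^ 2 / 2)) * -x) x :=
    (((hasDerivAt_pow 2 x).div_const 2).neg.congr_deriv (by norm_num)).exp
  refine ((Polynomial.hasDerivAt_aeval (hermite n) x).mul hG).congr_deriv ?_
  rw [hermite_succ, map_sub, map_mul, aeval_X]
  ring

theorem integral_aeval_mul_hermite_succ_mul_gaussian (p : ℤ[X]) (n : ℕ) :
    ∫ x, aeval x p * aeval x (hermite (n + 1)) * exp (-(x ^ 2 / 2)) =
      ∫ x, aeval x (derivative p) * aeval x (hermite n) * exp (-(x ^ 2 / 2)) := by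
  have huv' : Integrable fun x =>
      aeval x p * -(aeval x (hermite (n + 1)) * exp (-(x ^ 2 / 2))) := by
    simpa only [map_neg, map_mul, neg_mul, mul_neg, mul_assoc] using
      integrable_aeval_mul_gaussian (-(p * hermite (n + 1)))
  have hu'v : Integrable fun x =>
      aeval x (derivative p) * (aeval x (hermite n) * exp (-(x ^ 2 / 2))) := by
    simpa only [map_mul, mul_assoc] using integrable_aeval_mul_gaussian (derivative p * hermite n)
  have huv : Integrable fun x => aeval x p * (aeval x (hermite n) * exp (-(x ^ 2 / 2))) := by
    simpa only [map_mul, mul_assoc] using integrable_aeval_mul_gaussian (p * hermite n)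
  have hibp := integral_mul_deriv_eq_deriv_mul_of_integrable
    (fun x _ => Polynomial.hasDerivAt_aeval p x)
    (fun x _ => hasDerivAt_aeval_hermite_mul_gaussian n x) huv' hu'v huv
  simp only [mul_neg, integral_neg, neg_inj] at hibp
  simpa only [mul_assoc] using hibp

theorem integral_exp_neg_sq_div_two : ∫ x : ℝ, exp (-(x ^ 2 / 2)) = √(2 * π) := by
  simpa [neg_div, div_eq_inv_mul] using integral_gaussian 2⁻¹

theorem integral_hermite_mul_hermite_mul_gaussian (m n : ℕ) :
    ∫ x, aeval x (hermite m) * aeval x (hermite n) * exp (-(x ^ 2 / 2)) =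
      if m = n then (m ! : ℝ) * √(2 * π) else 0 := by
  induction n generalizing m with
  | zero =>
    rcases m with _ | m
    · simpa using integral_exp_neg_sq_div_two
    · simp_rw [mul_comm (aeval _ (hermite (m + 1))), integral_aeval_mul_hermite_succ_mul_gaussian]
      simp
  | succ n ih =>
    rw [integral_aeval_mul_hermite_succ_mul_gaussian]
    rcases m with _ | m
    · simp
    · calc _ = ∫ x, ((m : ℝ) + 1) *
              (aeval x (hermite m) * aeval x (hermite n) * exp (-(x ^ 2 / 2))) := by
            simp only [derivative_hermite_succ, map_mul, map_add, map_natCast, map_one, mul_assoc]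
        _ = _ := by
            simp only [integral_const_mul, ih, Nat.add_right_cancel_iff]
            split_ifs <;> push_cast [Nat.factorial_succ] <;> ring

theorem exp_neg_sq_eq_exp_neg_sqrt_two_mul_sq_div_two (x : ℝ) :
    exp (-x ^ 2) = exp (-((√2 * x) ^ 2 / 2)) := by
  rw [mul_pow, sq_sqrt zero_le_two]
  ring_nf

theorem integrable_hermite_mul_hermite_sqrt_two_mul_exp_neg_sq (m n : ℕ) :
    Integrable fun x : ℝ =>
      aeval (√2 * x) (hermite m) * aeval (√2 * x) (hermite n) * exp (-x ^ 2) := by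
  simpa only [map_mul, ← exp_neg_sq_eq_exp_neg_sqrt_two_mul_sq_div_two] using
    (integrable_aeval_mul_gaussian (hermite m * hermite n)).comp_mul_left' (by positivity : √2 ≠ 0)

theorem integral_hermite_mul_hermite_sqrt_two_mul_exp_neg_sq (m n : ℕ) :
    ∫ x : ℝ, aeval (√2 * x) (hermite m) * aeval (√2 * x) (hermite n) * exp (-x ^ 2) =
      if m = n then (m ! : ℝ) * √π else 0 := by
  simp only [exp_neg_sq_eq_exp_neg_sqrt_two_mul_sq_div_two]
  rw [Measure.integral_comp_mul_left
    (fun y => aeval y (hermite m) * aeval y (hermite n) * exp (-(y ^ 2 / 2))),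
    integral_hermite_mul_hermite_mul_gaussian, smul_eq_mul, abs_of_pos (by positivity),
    sqrt_mul zero_le_two]
  split_ifs
  · field_simp
  · rw [mul_zero]

namespace Matrix

variable {R : Type*} [CommRing R] {n : ℕ}

theorem det_vandermonde_smul (c : R) (v : Fin n → R) :
    (vandermonde (c • v)).det = c ^ n.choose 2 * (vandermonde v).det := by
  have hrow : vandermonde (c • v) =
      Matrix.of fun i j : Fin n => c ^ (j : ℕ) * vandermonde v i j := by
    ext i j
    simp [vandermonde_apply, mul_pow]
  rw [hrow, det_mul_row, prod_pow_eq_pow_sum, Fin.sum_univ_eq_sum_range (fun i => i) n,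
    sum_range_id, Nat.choose_two_right]

theorem det_vandermonde_comp_perm_sq_s12 (σ : Perm (Fin n)) (v : Fin n → R) :
    (vandermonde (v ∘ σ)).det ^ 2 = (vandermonde v).det ^ 2 := by
  have hperm : vandermonde (v ∘ σ) = (vandermonde v).submatrix σ id := rfl
  rw [hperm, det_permute, mul_pow, ← Int.cast_pow, ← Units.val_pow_eq_pow_val, Int.units_sq,
    Units.val_one, Int.cast_one, one_mul]

theorem det_vandermonde_sq (v : Fin n → R) :
    (vandermonde v).det ^ 2 = ∏ i, ∏ j ∈ Ioi i, (v i - v j) ^ 2 := by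
  simp only [det_vandermonde, ← prod_pow]
  exact prod_congr rfl fun i _ => prod_congr rfl fun j _ => sub_sq_comm _ _

theorem det_aeval_hermite_eq_det_vandermonde (v : Fin n → R) :
    (Matrix.of fun i j : Fin n => aeval (v j) (hermite i)).det = (vandermonde v).det := by
  nontriviality R
  rw [det_eval_matrixOfPolynomials_eq_det_vandermonde v (fun i => (hermite i).map (algebraMap ℤ R))
    (fun i => by rw [(hermite_monic i).natDegree_map, natDegree_hermite])
    (fun i => (hermite_monic i).map _), ← det_transpose]
  simp only [transpose, of_apply, eval_map_algebraMap]

end Matrix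

theorem det_sq_mul_prod_eq_sum {α : Type*} {n : ℕ} (p : Fin n → α → ℝ) (w : α → ℝ) (x : Fin n → α) :
    (Matrix.of fun i j => p i (x j)).det ^ 2 * ∏ j, w (x j) =
      ∑ σ : Perm (Fin n), ∑ τ : Perm (Fin n), ((Perm.sign σ * Perm.sign τ : ℤˣ) : ℝ) *
        ∏ j, (p (σ j) (x j) * p (τ j) (x j) * w (x j)) := by
  rw [sq, det_apply, sum_mul_sum, sum_mul]
  refine sum_congr rfl fun σ _ => ?_
  rw [sum_mul]
  refine sum_congr rfl fun τ _ => ?_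
  simp only [of_apply, Units.smul_def, zsmul_eq_mul, Units.val_mul, Int.cast_mul, prod_mul_distrib]
  ring

section Andreief

variable {α : Type*} [MeasurableSpace α] {μ : Measure α} [SigmaFinite μ] {n : ℕ}
  {p : Fin n → α → ℝ} {w : α → ℝ}

theorem integrable_det_sq_mul_prod (hint : ∀ i j, Integrable (fun t => p i t * p j t * w t) μ) :
    Integrable (fun x => (Matrix.of fun i j => p i (x j)).det ^ 2 * ∏ j, w (x j))
      (Measure.pi fun _ => μ) := by
  simp only [det_sq_mul_prod_eq_sum]
  exact integrable_finsetSum _ fun σ _ => integrable_finsetSum _ fun τ _ =>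
    (Integrable.fintype_prod fun j => hint (σ j) (τ j)).const_mul _

theorem integral_prod_of_orthogonal {h : Fin n → ℝ}
    (horth : ∀ i j, ∫ t, p i t * p j t * w t ∂μ = if i = j then h i else 0)
    (σ τ : Perm (Fin n)) :
    ∫ x, ∏ j, (p (σ j) (x j) * p (τ j) (x j) * w (x j)) ∂(Measure.pi fun _ => μ) =
      if σ = τ then ∏ i, h i else 0 := by
  rw [integral_fintype_prod_eq_prod (fun j t => p (σ j) t * p (τ j) t * w t)]
  simp only [horth, prod_ite_zero, mem_univ, true_implies, ← Equiv.ext_iff]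
  split_ifs with hστ
  · exact Equiv.prod_comp σ h
  · rfl

theorem integral_det_sq_mul_prod_of_orthogonal {h : Fin n → ℝ}
    (hint : ∀ i j, Integrable (fun t => p i t * p j t * w t) μ)
    (horth : ∀ i j, ∫ t, p i t * p j t * w t ∂μ = if i = j then h i else 0) :
    ∫ x, (Matrix.of fun i j => p i (x j)).det ^ 2 * ∏ j, w (x j) ∂(Measure.pi fun _ => μ) =
      n ! * ∏ i, h i := by
  simp only [det_sq_mul_prod_eq_sum]
  have hterm (σ τ : Perm (Fin n)) : Integrable (fun x => ((Perm.sign σ * Perm.sign τ : ℤˣ) : ℝ) *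
      ∏ j, (p (σ j) (x j) * p (τ j) (x j) * w (x j))) (Measure.pi fun _ => μ) :=
    (Integrable.fintype_prod fun j => hint (σ j) (τ j)).const_mul _
  rw [integral_finsetSum _ fun σ _ => integrable_finsetSum _ fun τ _ => hterm σ τ]
  simp only [integral_finsetSum _ fun τ _ => hterm _ τ, integral_const_mul,
    integral_prod_of_orthogonal horth, mul_ite, mul_zero, sum_ite_eq, mem_univ, if_true,
    Int.units_mul_self, Units.val_one, Int.cast_one, one_mul, sum_const, card_univ,
    Fintype.card_perm, Fintype.card_fin, nsmul_eq_mul]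

end Andreief

section Symmetrization

variable {n : ℕ}

theorem volume_setOf_not_injective : volume {x : Fin n → ℝ | ¬ Function.Injective x} = 0 := by
  have hsub : {x : Fin n → ℝ | ¬ Function.Injective x} ⊆
      ⋃ (i : Fin n) (j : Fin n) (_ : i ≠ j),
        (LinearMap.ker ((LinearMap.proj i : (Fin n → ℝ) →ₗ[ℝ] ℝ) - LinearMap.proj j) : Set _) := by
    intro x hx
    simp only [Function.Injective, not_forall] at hx
    obtain ⟨i, j, hij, hne⟩ := hx
    simpa [sub_eq_zero] using ⟨i, j, hne, hij⟩
  refine measure_mono_null hsub (measure_iUnion_null fun i => measure_iUnion_null fun j =>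
    measure_iUnion_null fun hij => Measure.addHaar_submodule _ _ fun htop => ?_)
  have hsingle : (Pi.single i 1 : Fin n → ℝ) ∈ LinearMap.ker
      ((LinearMap.proj i : (Fin n → ℝ) →ₗ[ℝ] ℝ) - LinearMap.proj j) := htop ▸ Submodule.mem_top
  simp [hij.symm] at hsingle

theorem measurableSet_setOf_antitone_s12 : MeasurableSet {x : Fin n → ℝ | Antitone x} := by
  simp only [Antitone, Set.ofPred_forall]
  exact .iInter fun i => .iInter fun j => .iInter fun _ =>
    measurableSet_le (measurable_pi_apply j) (measurable_pi_apply i)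

theorem iUnion_setOf_antitone_comp_perm :
    ⋃ σ : Perm (Fin n), {x : Fin n → ℝ | Antitone (x ∘ σ)} = Set.univ :=
  Set.eq_univ_of_forall fun x => Set.mem_iUnion.2
    ⟨Tuple.sort (-x), fun a b hab => by simpa using Tuple.monotone_sort (-x) hab⟩

theorem measurableSet_setOf_antitone_comp_perm (σ : Perm (Fin n)) :
    MeasurableSet {x : Fin n → ℝ | Antitone (x ∘ σ)} :=
  measurableSet_setOf_antitone_s12.preimage (measurable_pi_lambda _ fun i => measurable_pi_apply (σ i))

theorem aedisjoint_setOf_antitone_comp_perm {σ τ : Perm (Fin n)} (hστ : σ ≠ τ) :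
    AEDisjoint volume {x : Fin n → ℝ | Antitone (x ∘ σ)} {x | Antitone (x ∘ τ)} := by
  refine measure_mono_null ?_ volume_setOf_not_injective
  rintro x ⟨hσ, hτ⟩ hx
  exact hστ <| Equiv.ext fun i => hx (congrFun (Tuple.unique_antitone hσ hτ) i)

theorem setIntegral_setOf_antitone_comp_perm {E : Type*} [NormedAddCommGroup E] [NormedSpace ℝ E]
    {f : (Fin n → ℝ) → E} (hsymm : ∀ (σ : Perm (Fin n)) x, f (x ∘ σ) = f x) (σ : Perm (Fin n)) :
    ∫ x in {x | Antitone (x ∘ σ)}, f x = ∫ x in {x | Antitone x}, f x := by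
  set e := MeasurableEquiv.piCongrLeft (fun _ : Fin n => ℝ) σ.symm
  have he : ∀ x, e x = x ∘ σ := fun x => by
    ext i
    simp [e, MeasurableEquiv.piCongrLeft, Equiv.piCongrLeft]
  have hpre : e ⁻¹' {x | Antitone x} = {x | Antitone (x ∘ σ)} := by
    ext x
    simp [he]
  calc ∫ x in {x | Antitone (x ∘ σ)}, f x = ∫ x in e ⁻¹' {x | Antitone x}, f (e x) := by
        simp only [hpre, he, hsymm]
    _ = ∫ x in {x | Antitone x}, f x :=
        (volume_measurePreserving_piCongrLeft _ σ.symm).setIntegral_preimage_emb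
          e.measurableEmbedding f _

theorem integral_eq_factorial_smul_setIntegral_antitone_s12 {E : Type*} [NormedAddCommGroup E]
    [NormedSpace ℝ E] {f : (Fin n → ℝ) → E} (hf : Integrable f)
    (hsymm : ∀ (σ : Perm (Fin n)) x, f (x ∘ σ) = f x) :
    ∫ x, f x = n ! • ∫ x in {x | Antitone x}, f x := by
  calc ∫ x, f x = ∫ x in ⋃ σ : Perm (Fin n), {x | Antitone (x ∘ σ)}, f x := by
        rw [iUnion_setOf_antitone_comp_perm, setIntegral_univ]
    _ = ∑ σ : Perm (Fin n), ∫ x in {x | Antitone (x ∘ σ)}, f x := by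
        rw [integral_iUnion_ae
          (fun σ => (measurableSet_setOf_antitone_comp_perm σ).nullMeasurableSet)
          (fun σ τ => aedisjoint_setOf_antitone_comp_perm) hf.integrableOn, tsum_fintype]
    _ = n ! • ∫ x in {x | Antitone x}, f x := by
        simp only [setIntegral_setOf_antitone_comp_perm hsymm, sum_const, card_univ,
          Fintype.card_perm, Fintype.card_fin]

end Symmetrization

section ExpNegSq

variable {n : ℕ}

theorem det_aeval_sqrt_two_mul_hermite_sq (x : Fin n → ℝ) :
    (Matrix.of fun i j : Fin n => aeval (√2 * x j) (hermite i)).det ^ 2 =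
      2 ^ n.choose 2 * (vandermonde x).det ^ 2 := by
  rw [det_aeval_hermite_eq_det_vandermonde (fun j => √2 * x j)]
  change (vandermonde (√2 • x)).det ^ 2 = _
  rw [det_vandermonde_smul, mul_pow, ← pow_mul, mul_comm (n.choose 2), pow_mul,
    sq_sqrt zero_le_two]

theorem integrable_det_vandermonde_sq_mul_prod_exp_neg_sq :
    Integrable fun x : Fin n → ℝ => (vandermonde x).det ^ 2 * ∏ i, exp (-x i ^ 2) := by
  have h := integrable_det_sq_mul_prod (μ := volume)
    (p := fun (i : Fin n) t => aeval (√2 * t) (hermite i)) (w := fun t => exp (-t ^ 2))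
    fun i j => integrable_hermite_mul_hermite_sqrt_two_mul_exp_neg_sq i j
  simp only [det_aeval_sqrt_two_mul_hermite_sq, mul_assoc] at h
  exact (integrable_const_mul_iff (by simp) _).1 h

theorem integral_det_vandermonde_sq_mul_prod_exp_neg_sq :
    ∫ x : Fin n → ℝ, (vandermonde x).det ^ 2 * ∏ i, exp (-x i ^ 2) =
      (n ! * ∏ i : Fin n, ((i : ℕ) ! * √π)) / 2 ^ n.choose 2 := by
  have h := integral_det_sq_mul_prod_of_orthogonal (μ := volume)
    (p := fun (i : Fin n) t => aeval (√2 * t) (hermite i)) (w := fun t => exp (-t ^ 2))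
    (h := fun i => (i : ℕ) ! * √π)
    (fun i j => integrable_hermite_mul_hermite_sqrt_two_mul_exp_neg_sq i j)
    (fun i j => by simp only [integral_hermite_mul_hermite_sqrt_two_mul_exp_neg_sq, Fin.val_inj])
  simp only [det_aeval_sqrt_two_mul_hermite_sq, mul_assoc, integral_const_mul, ← volume_pi] at h
  rw [eq_div_iff (by positivity), mul_comm, ← h]

end ExpNegSq

theorem stmt_12_general {M : ℕ} :
    (∫ x : Fin M → ℝ in {x | ∀ i j : Fin M, i ≤ j → x j ≤ x i},
      (∏ i : Fin M, ∏ j ∈ Finset.Ioi i, (x i - x j) ^ 2) *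
        ∏ i : Fin M, Real.exp (-(x i ^ 2)))
    = Real.pi ^ ((M : ℝ) / 2) / 2 ^ (M * (M - 1) / 2) *
        ∏ i : Fin M, ((i : ℕ).factorial : ℝ) := by
  have hsymm (σ : Perm (Fin M)) (x : Fin M → ℝ) :
      (vandermonde (x ∘ σ)).det ^ 2 * ∏ i, exp (-(x ∘ σ) i ^ 2) =
        (vandermonde x).det ^ 2 * ∏ i, exp (-x i ^ 2) := by
    rw [det_vandermonde_comp_perm_sq_s12, Function.comp_def, Equiv.prod_comp σ fun i => exp (-x i ^ 2)]
  have h := integral_eq_factorial_smul_setIntegral_antitone_s12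
    integrable_det_vandermonde_sq_mul_prod_exp_neg_sq hsymm
  rw [integral_det_vandermonde_sq_mul_prod_exp_neg_sq, nsmul_eq_mul, mul_div_assoc,
    mul_right_inj' (by positivity)] at h
  simp only [← det_vandermonde_sq]
  change ∫ x in {x | Antitone x}, _ = _
  rw [← h, prod_mul_distrib, prod_const, card_univ, Fintype.card_fin, Nat.choose_two_right,
    sqrt_eq_rpow, ← rpow_natCast, ← rpow_mul pi_pos.le]
  ring_nf

/-- Normalizing constant of the joint eigenvalue density of the Gaussian unitary
ensemble: the integral of the squared Vandermonde determinant times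
`Π_i e^{-x_i²}` over the ordered region `x_1 ≥ ⋯ ≥ x_M` equals
`2^{-M(M-1)/2} π^{M/2} Π_{i=1}^M (i-1)!`. -/
theorem stmt_12 {M : ℕ} (hM : 1 ≤ M) :
    (∫ x : Fin M → ℝ in {x | ∀ i j : Fin M, i ≤ j → x j ≤ x i},
      (∏ i : Fin M, ∏ j ∈ Finset.Ioi i, (x i - x j) ^ 2) *
        ∏ i : Fin M, Real.exp (-(x i ^ 2)))
    = Real.pi ^ ((M : ℝ) / 2) / 2 ^ (M * (M - 1) / 2) *
        ∏ i : Fin M, ((i : ℕ).factorial : ℝ) :=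
  stmt_12_general
end

section
/- Let N ≥ 1, let A = (a_{i,j,k})_{1≤i,j,k≤N} be a rank-3 tensor with complex entries, and let {B_1,…,B_r} be a partition of {1,…,N} such that a_{i,j,k} = a_{i,j,k'} whenever k and k' lie in the same block. For a permutation μ of {1,…,N}, let A^{(μ)} denote the N×N matrix with (i,j) entry a_{μ(i),j,i}. Then: (i) for every permutation τ that maps each block B_t to itself and every permutation μ, sgn(μ∘τ) · det A^{(μ∘τ)} = sgn(μ) · det A^{(μ)}; and consequently (ii) T(A) = (Π_{t=1}^r |B_t|!) · Σ_{μ ∈ R} sgn(μ) · det A^{(μ)}, where R is the set of permutations μ of {1,…,N} whose restriction to each block B_t is increasing (i.e., for k < k' in the same block, μ(k) < μ(k')). In particular the number of determinant evaluations needed to compute T(A) reduces from N! to N!/Π_{t=1}^r |B_t|!. -/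
/-! For a block-preserving `τ`, the matrix `A^{(μ∘τ)}` is `A^{(μ)}` with its rows permuted by `τ`,
because the entries of `A` only see the block of the third index; hence `sgn(μ) det A^{(μ)}` is
constant on each coset `μH` of the Young subgroup `H` of the partition. Every such coset contains
exactly one permutation that is increasing on each block, so the sum over all `μ` defining `T(A)`
is `|H| = ∏ₜ |Bₜ|!` times the sum over these representatives. -/

open MeasureTheory

/-- The matrix `A^{(μ)}` with `(i,j)` entry `a_{μ(i), j, i}`. -/
def permMat {N : ℕ} (A : Fin N → Fin N → Fin N → ℂ) (μ : Equiv.Perm (Fin N)) :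
    Matrix (Fin N) (Fin N) ℂ :=
  Matrix.of fun i j => A (μ i) j i

open Finset Equiv

theorem sum_mul_comp_swap_sub_sum_mul {α R : Type*} [Fintype α] [DecidableEq α] [CommRing R]
    (w g : α → R) {a b : α} (hab : a ≠ b) :
    ∑ k, w k * g (swap a b k) - ∑ k, w k * g k = (w b - w a) * (g a - g b) := by
  rw [← sum_sub_distrib, Fintype.sum_eq_add a b hab fun k hk => by
    rw [swap_apply_of_ne_of_ne hk.1 hk.2, sub_self], swap_apply_left, swap_apply_right]
  ring

section Blocks

variable {α β : Type*} [Fintype α] [LinearOrder α] [DecidableEq β] (P : α → β)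

/-- The Young subgroup of the partition of `α` into the fibres of `P`. -/
def blockPreserving : Finset (Perm α) :=
  univ.filter fun τ => ∀ k, P (τ k) = P k

/-- The set `R` of the paper. -/
def blockIncreasing : Finset (Perm α) :=
  univ.filter fun ρ => ∀ k k', P k = P k' → k < k' → ρ k < ρ k'

variable {P}

theorem mem_blockPreserving {τ : Perm α} : τ ∈ blockPreserving P ↔ ∀ k, P (τ k) = P k := by
  simp [blockPreserving]

theorem mem_blockIncreasing {ρ : Perm α} :
    ρ ∈ blockIncreasing P ↔ ∀ k k', P k = P k' → k < k' → ρ k < ρ k' := by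
  simp [blockIncreasing]

theorem mul_mem_blockPreserving {σ τ : Perm α} (hσ : σ ∈ blockPreserving P)
    (hτ : τ ∈ blockPreserving P) : σ * τ ∈ blockPreserving P :=
  mem_blockPreserving.2 fun k => (mem_blockPreserving.1 hσ _).trans (mem_blockPreserving.1 hτ k)

theorem inv_mem_blockPreserving {τ : Perm α} (hτ : τ ∈ blockPreserving P) :
    τ⁻¹ ∈ blockPreserving P :=
  mem_blockPreserving.2 fun k => by
    simpa using (mem_blockPreserving.1 hτ (τ⁻¹ k)).symm

theorem swap_mem_blockPreserving {a b : α} (h : P a = P b) : swap a b ∈ blockPreserving P :=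
  mem_blockPreserving.2 fun k => by
    rcases eq_or_ne k a with rfl | hka
    · rw [swap_apply_left, h]
    rcases eq_or_ne k b with rfl | hkb
    · rw [swap_apply_right, h]
    · rw [swap_apply_of_ne_of_ne hka hkb]

theorem apply_lt_apply_iff_of_mem_blockIncreasing {ρ : Perm α} (hρ : ρ ∈ blockIncreasing P)
    {a b : α} (h : P a = P b) : ρ a < ρ b ↔ a < b := by
  refine ⟨fun hlt => lt_of_not_ge fun hba => ?_, mem_blockIncreasing.1 hρ a b h⟩
  rcases hba.lt_or_eq with hba | rfl
  · exact (mem_blockIncreasing.1 hρ b a h.symm hba).asymm hlt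
  · exact hlt.false

/-- A block-preserving `σ` with `ρ` and `ρ * σ` both block-increasing is strictly monotone on
each block, and a strictly monotone self-map of a well-order is inflationary. -/
theorem le_apply_of_mul_mem_blockIncreasing {ρ σ : Perm α} (hρ : ρ ∈ blockIncreasing P)
    (hρσ : ρ * σ ∈ blockIncreasing P) (hσ : σ ∈ blockPreserving P) (k : α) : k ≤ σ k := by
  have hσ' := mem_blockPreserving.1 hσ
  let f : {x // P x = P k} → {x // P x = P k} := fun x => ⟨σ x, (hσ' x).trans x.2⟩
  have hf : StrictMono f := fun x y hxy =>
    (apply_lt_apply_iff_of_mem_blockIncreasing hρ ((hσ' x).trans (x.2.trans (y.2.symm.trans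
      (hσ' y).symm)))).1 (mem_blockIncreasing.1 hρσ x y (x.2.trans y.2.symm) hxy)
  exact hf.le_apply (x := ⟨k, rfl⟩)

theorem eq_one_of_mul_mem_blockIncreasing {ρ σ : Perm α} (hρ : ρ ∈ blockIncreasing P)
    (hρσ : ρ * σ ∈ blockIncreasing P) (hσ : σ ∈ blockPreserving P) : σ = 1 := by
  have hσ_le : ∀ k, σ k ≤ k := fun k => by
    simpa using le_apply_of_mul_mem_blockIncreasing hρσ (by simpa using hρ)
      (inv_mem_blockPreserving hσ) (σ k)
  exact Perm.ext fun k => (hσ_le k).antisymm (le_apply_of_mul_mem_blockIncreasing hρ hρσ hσ k)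

/-- Maximise the rearrangement sum `∑ k, w k * w (μ (τ k))` over block-preserving `τ`: swapping
an inversion of `μ * τ` inside a block would increase it. -/
theorem exists_mul_mem_blockIncreasing (μ : Perm α) :
    ∃ τ ∈ blockPreserving P, μ * τ ∈ blockIncreasing P := by
  obtain ⟨w, hw⟩ : ∃ w : α → ℤ, StrictMono w :=
    ⟨fun k => ((monoEquivOfFin α rfl).symm k : ℕ),
      Nat.strictMono_cast.comp (Fin.val_strictMono.comp (monoEquivOfFin α rfl).symm.strictMono)⟩
  obtain ⟨τ, hτ, hmax⟩ := (blockPreserving P).exists_max_image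
    (fun τ => ∑ k, w k * w (μ (τ k))) ⟨1, mem_blockPreserving.2 fun _ => rfl⟩
  refine ⟨τ, hτ, mem_blockIncreasing.2 fun a b hab hlt => lt_of_not_ge fun hge => ?_⟩
  have hgt : μ (τ b) < μ (τ a) := hge.lt_of_ne (by simpa using hlt.ne')
  have hswap := hmax (τ * swap a b) (mul_mem_blockPreserving hτ (swap_mem_blockPreserving hab))
  rw [← sub_nonpos] at hswap
  simp only [Perm.mul_apply] at hswap
  rw [sum_mul_comp_swap_sub_sum_mul w (fun k => w (μ (τ k))) hlt.ne] at hswap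
  exact hswap.not_gt (mul_pos (sub_pos.2 (hw hlt)) (sub_pos.2 (hw hgt)))

theorem sum_perm_eq_card_smul_sum_blockIncreasing {M : Type*} [AddCommMonoid M]
    (f : Perm α → M) (hf : ∀ μ, ∀ τ ∈ blockPreserving P, f (μ * τ) = f μ) :
    ∑ μ, f μ = #(blockPreserving P) • ∑ ρ ∈ blockIncreasing P, f ρ := by
  calc ∑ μ, f μ = ∑ p ∈ blockIncreasing P ×ˢ blockPreserving P, f (p.1 * p.2) := by
        refine (sum_bij (fun p _ => p.1 * p.2) (fun _ _ => mem_univ _) ?_ ?_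
          fun _ _ => rfl).symm
        · rintro ⟨ρ, τ⟩ hp ⟨ρ', τ'⟩ hp' h
          simp only [mem_product] at hp hp'
          have hτ : τ * τ'⁻¹ = 1 := eq_one_of_mul_mem_blockIncreasing hp.1
            (by simpa [← mul_assoc, h] using hp'.1)
            (mul_mem_blockPreserving hp.2 (inv_mem_blockPreserving hp'.2))
          obtain rfl : τ = τ' := mul_inv_eq_one.1 hτ
          simp_all
        · intro μ _
          obtain ⟨τ, hτ, hμτ⟩ := exists_mul_mem_blockIncreasing (P := P) μ
          exact ⟨(μ * τ, τ⁻¹), mem_product.2 ⟨hμτ, inv_mem_blockPreserving hτ⟩, by simp⟩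
    _ = ∑ ρ ∈ blockIncreasing P, ∑ _τ ∈ blockPreserving P, f ρ := by
        rw [sum_product]
        exact sum_congr rfl fun ρ _ => sum_congr rfl fun τ hτ => hf ρ τ hτ
    _ = #(blockPreserving P) • ∑ ρ ∈ blockIncreasing P, f ρ := by
        simp only [sum_const, smul_sum]

theorem card_blockPreserving [Fintype β] :
    #(blockPreserving P) = ∏ b, (#(univ.filter fun k => P k = b)).factorial := by
  simp only [blockPreserving, ← Fintype.card_subtype]
  convert DomMulAct.stabilizer_card P using 3
  simp [funext_iff]

end Blocks

section PseudoDet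

variable {N : ℕ} (A : Fin N → Fin N → Fin N → ℂ)

theorem pseudoDet_eq_sum_sign_mul_det :
    pseudoDet A = ∑ μ : Perm (Fin N), ((Perm.sign μ : ℤ) : ℂ) * (permMat A μ).det := by
  refine sum_congr rfl fun μ _ => ?_
  rw [← Matrix.det_transpose, Matrix.det_apply', mul_sum]
  refine sum_congr rfl fun σ _ => ?_
  simp only [Matrix.transpose_apply, permMat, Matrix.of_apply]
  ring

variable {A} {β : Type*} {P : Fin N → β}

theorem permMat_mul_of_blockPreserving (hA : ∀ i j k k', P k = P k' → A i j k = A i j k')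
    {τ : Perm (Fin N)} (hτ : ∀ k, P (τ k) = P k) (μ : Perm (Fin N)) :
    permMat A (μ * τ) = (permMat A μ).submatrix τ id := by
  ext i j
  exact hA _ _ _ _ (hτ i).symm

theorem sign_mul_det_permMat_mul_of_blockPreserving
    (hA : ∀ i j k k', P k = P k' → A i j k = A i j k')
    {τ : Perm (Fin N)} (hτ : ∀ k, P (τ k) = P k) (μ : Perm (Fin N)) :
    ((Perm.sign (μ * τ) : ℤ) : ℂ) * (permMat A (μ * τ)).det
      = ((Perm.sign μ : ℤ) : ℂ) * (permMat A μ).det := by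
  have hsq : ((Perm.sign τ : ℤ) : ℂ) * (Perm.sign τ : ℤ) = 1 := by
    rw [← Int.cast_mul, ← Units.val_mul, Int.units_mul_self, Units.val_one, Int.cast_one]
  rw [permMat_mul_of_blockPreserving hA hτ, Matrix.det_permute, Perm.sign_mul, Units.val_mul,
    Int.cast_mul]
  linear_combination ((Perm.sign μ : ℤ) : ℂ) * (permMat A μ).det * hsq

end PseudoDet

theorem stmt_14_general {N r : ℕ} (A : Fin N → Fin N → Fin N → ℂ)
    (P : Fin N → Fin r)
    (hA : ∀ i j k k', P k = P k' → A i j k = A i j k') :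
    (∀ (τ μ : Equiv.Perm (Fin N)), (∀ k, P (τ k) = P k) →
        ((Equiv.Perm.sign (μ * τ) : ℤ) : ℂ) * (permMat A (μ * τ)).det
          = ((Equiv.Perm.sign μ : ℤ) : ℂ) * (permMat A μ).det) ∧
      pseudoDet A =
        (∏ b : Fin r, (((Finset.univ.filter fun k => P k = b).card.factorial : ℕ) : ℂ)) *
          ∑ μ ∈ Finset.univ.filter
              (fun μ : Equiv.Perm (Fin N) =>
                ∀ k k' : Fin N, P k = P k' → k < k' → μ k < μ k'),
            ((Equiv.Perm.sign μ : ℤ) : ℂ) * (permMat A μ).det := by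
  refine ⟨fun τ μ hτ => sign_mul_det_permMat_mul_of_blockPreserving hA hτ μ, ?_⟩
  rw [pseudoDet_eq_sum_sign_mul_det, sum_perm_eq_card_smul_sum_blockIncreasing (P := P) _
    fun μ τ hτ => sign_mul_det_permMat_mul_of_blockPreserving hA (mem_blockPreserving.1 hτ) μ,
    card_blockPreserving, nsmul_eq_mul, Nat.cast_prod, blockIncreasing]
  congr -- the two filters differ only in their decidability instances

/-- Complexity reduction for the pseudo-determinant of a tensor whose entries only
depend on the third index through the block of a partition (the partition of
`{1,…,N}` is encoded by the block-assignment map `P : Fin N → Fin r`, whose fibers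
are the blocks).  (i) For every block-preserving permutation `τ`,
`sgn(μ∘τ) det A^{(μ∘τ)} = sgn(μ) det A^{(μ)}`; (ii) `T(A)` equals
`Π_t |B_t|!` times the sum of `sgn(μ) det A^{(μ)}` restricted to the permutations
that are increasing on each block. -/
theorem stmt_14 {N r : ℕ} (hN : 1 ≤ N) (A : Fin N → Fin N → Fin N → ℂ)
    (P : Fin N → Fin r) (hP : Function.Surjective P)
    (hA : ∀ i j k k', P k = P k' → A i j k = A i j k') :
    (∀ (τ μ : Equiv.Perm (Fin N)), (∀ k, P (τ k) = P k) →
        ((Equiv.Perm.sign (μ * τ) : ℤ) : ℂ) * (permMat A (μ * τ)).det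
          = ((Equiv.Perm.sign μ : ℤ) : ℂ) * (permMat A μ).det) ∧
      pseudoDet A =
        (∏ b : Fin r, (((Finset.univ.filter fun k => P k = b).card.factorial : ℕ) : ℂ)) *
          ∑ μ ∈ Finset.univ.filter
              (fun μ : Equiv.Perm (Fin N) =>
                ∀ k k' : Fin N, P k = P k' → k < k' → μ k < μ k'),
            ((Equiv.Perm.sign μ : ℤ) : ℂ) * (permMat A μ).det :=
  stmt_14_general A P hA
end

section
/- Let n ≥ M ≥ 1 be integers and 0 ≤ a ≤ b < ∞ reals. Then ∫_{b ≥ x_1 ≥ x_2 ≥ ⋯ ≥ x_M ≥ a} Π_{1≤i<j≤M} (x_i − x_j)^2 · Π_{i=1}^M x_i^{n−M} e^{−x_i} dx_1⋯dx_M = det B, where B is the M×M matrix with entries b_{i,j} = γ(n−M+i+j−1, b) − γ(n−M+i+j−1, a) and γ(s, t) := ∫_0^t u^{s−1} e^{−u} du is the lower incomplete gamma function. (Multiplied by the Wishart normalizing constant 1/Π_{i=1}^M (n−i)!(M−i)!, this gives the probability that all eigenvalues of a complex central uncorrelated Wishart matrix of dimension M with n degrees of freedom lie in the interval [a,b].)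 -/
/-!
The integrand is `det[x_k^i] · det[x_k^i w(x_k)]` with `w(u) = u^(n-M) e^(-u)`, a function of the
point `x` that is invariant under permuting coordinates. Almost every point of the box `[a,b]^M`
has distinct coordinates and so lies in exactly one of the `M!` permuted copies of the ordered
region; hence the ordered integral is `1/M!` times the box integral. Over the box, expanding both
determinants and integrating each product by Fubini gives Andréief's identity
`∫ det[f_i(x_k)] det[g_j(x_k)] = M! det[∫ f_i g_j]`, and `∫_a^b u^(i+j) w(u) du` is a difference
of lower incomplete gamma values.
-/

open MeasureTheory

/-- The lower incomplete gamma function `γ(s, t) = ∫_0^t u^{s-1} e^{-u} du`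
(for a natural-number parameter `s`). -/
noncomputable def lowGamma (s : ℕ) (t : ℝ) : ℝ :=
  ∫ u in (0 : ℝ)..t, u ^ (s - 1) * Real.exp (-u)

open Finset Equiv Nat Function

namespace Matrix

variable {ι R : Type*} [Fintype ι] [DecidableEq ι] [CommRing R]

theorem det_mul_det_eq_sum_perm_sum_perm (A B : Matrix ι ι R) :
    A.det * B.det = ∑ σ : Perm ι, ∑ τ : Perm ι,
      ((Perm.sign σ : ℤ) : R) * (Perm.sign τ : ℤ) * ∏ k, A (σ k) k * B (τ k) k := by
  rw [det_apply', det_apply', sum_mul_sum]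
  refine sum_congr rfl fun σ _ => sum_congr rfl fun τ _ => ?_
  rw [prod_mul_distrib]
  ring

theorem intCast_sign_mul_self (σ : Perm ι) : ((Perm.sign σ : ℤ) : R) * (Perm.sign σ : ℤ) = 1 := by
  rw [← Int.cast_mul, ← Units.val_mul, Int.units_mul_self, Units.val_one, Int.cast_one]

theorem sum_perm_sum_perm_sign_mul_sign_mul_prod (C : Matrix ι ι R) :
    ∑ σ : Perm ι, ∑ τ : Perm ι, ((Perm.sign σ : ℤ) : R) * (Perm.sign τ : ℤ) *
      ∏ k, C (σ k) (τ k) = (Fintype.card ι)! * C.det := by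
  have hrow : ∀ σ : Perm ι,
      ∑ τ : Perm ι, ((Perm.sign τ : ℤ) : R) * ∏ k, C (σ k) (τ k) = Perm.sign σ * C.det :=
    fun σ => by rw [← det_permute, ← det_transpose, det_apply']; rfl
  simp_rw [mul_assoc, ← mul_sum, hrow, ← mul_assoc, intCast_sign_mul_self, one_mul, sum_const,
    Finset.card_univ, Fintype.card_perm, nsmul_eq_mul]

theorem det_of_comp_perm_mul_det_of_comp_perm {α : Type*} (f g : ι → α → R) (x : ι → α)
    (σ : Perm ι) :
    (of fun i k => f i (x (σ k))).det * (of fun i k => g i (x (σ k))).det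
      = (of fun i k => f i (x k)).det * (of fun i k => g i (x k)).det := by
  have hperm : ∀ h : ι → α → R,
      (of fun i k => h i (x (σ k))).det = Perm.sign σ * (of fun i k => h i (x k)).det :=
    fun h => det_permute' σ (of fun i k => h i (x k))
  rw [hperm, hperm, mul_mul_mul_comm, intCast_sign_mul_self, one_mul]

theorem prod_Ioi_sub_sq_mul_prod_eq_det_mul_det {n : ℕ} (x : Fin n → R) (w : R → R) :
    (∏ i, ∏ j ∈ Ioi i, (x i - x j) ^ 2) * ∏ k, w (x k)
      = (of fun i k : Fin n => x k ^ (i : ℕ)).det *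
          (of fun i k : Fin n => x k ^ (i : ℕ) * w (x k)).det := by
  have hV : (of fun i k : Fin n => x k ^ (i : ℕ)).det = ∏ i, ∏ j ∈ Ioi i, (x j - x i) :=
    (det_transpose _).trans (det_vandermonde x)
  have hW : (of fun i k : Fin n => x k ^ (i : ℕ) * w (x k)).det
      = (∏ k, w (x k)) * (of fun i k : Fin n => x k ^ (i : ℕ)).det := by
    simp_rw [mul_comm _ (w _)]
    exact det_mul_row (fun k => w (x k)) _
  have hsq : ∏ i, ∏ j ∈ Ioi i, (x i - x j) ^ 2 = (∏ i, ∏ j ∈ Ioi i, (x j - x i)) ^ 2 := by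
    simp_rw [← prod_pow, sub_sq_comm]
  rw [hW, hV, hsq]
  ring

end Matrix

namespace MeasureTheory

theorem integral_det_mul_det_pi {ι α 𝕜 : Type*} [Fintype ι] [DecidableEq ι] [RCLike 𝕜]
    [MeasurableSpace α] (μ : Measure α) [SigmaFinite μ] (f g : ι → α → 𝕜)
    (hfg : ∀ i j, Integrable (fun u => f i u * g j u) μ) :
    ∫ x, (Matrix.of fun i k => f i (x k)).det * (Matrix.of fun i k => g i (x k)).det
        ∂(Measure.pi fun _ => μ)
      = ((Fintype.card ι)! : 𝕜) * (Matrix.of fun i j => ∫ u, f i u * g j u ∂μ).det := by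
  have hterm : ∀ σ τ : Perm ι, Integrable (fun x : ι → α =>
      ((Perm.sign σ : ℤ) : 𝕜) * (Perm.sign τ : ℤ) * ∏ k, f (σ k) (x k) * g (τ k) (x k))
      (Measure.pi fun _ => μ) :=
    fun σ τ => (Integrable.fintype_prod fun k => hfg (σ k) (τ k)).const_mul _
  simp_rw [Matrix.det_mul_det_eq_sum_perm_sum_perm, Matrix.of_apply]
  rw [integral_finsetSum _ fun σ _ => integrable_finsetSum _ fun τ _ => hterm σ τ]
  simp_rw [integral_finsetSum _ fun τ _ => hterm _ τ, integral_const_mul]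
  rw [← Matrix.sum_perm_sum_perm_sign_mul_sign_mul_prod]
  refine sum_congr rfl fun σ _ => sum_congr rfl fun τ _ => ?_
  rw [integral_fintype_prod_eq_prod (fun k u => f (σ k) u * g (τ k) u)]
  rfl

theorem setIntegral_pi_det_mul_det {ι α : Type*} [Fintype ι] [DecidableEq ι] [MeasureSpace α]
    [SigmaFinite (volume : Measure α)] (s : Set α) (f g : ι → α → ℝ)
    (hfg : ∀ i j, IntegrableOn (fun u => f i u * g j u) s) :
    ∫ x in {x : ι → α | ∀ i, x i ∈ s},
        (Matrix.of fun i k => f i (x k)).det * (Matrix.of fun i k => g i (x k)).det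
      = (Fintype.card ι)! * (Matrix.of fun i j => ∫ u in s, f i u * g j u).det := by
  have hpi : {x : ι → α | ∀ i, x i ∈ s} = Set.univ.pi fun _ => s := by
    ext x; simp only [Set.mem_univ_pi, Set.mem_ofPred_eq]
  rw [hpi, volume_pi, Measure.restrict_pi_pi]
  exact integral_det_mul_det_pi _ f g hfg

theorem volume_setOf_apply_eq_apply {ι : Type*} [Fintype ι] {i j : ι} (hij : i ≠ j) :
    volume {x : ι → ℝ | x i = x j} = 0 := by
  classical
  let L : (ι → ℝ) →ₗ[ℝ] ℝ := (LinearMap.proj i : (ι → ℝ) →ₗ[ℝ] ℝ) - LinearMap.proj j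
  have hL : {x : ι → ℝ | x i = x j} = LinearMap.ker L := by
    ext x; simp [L, sub_eq_zero]
  rw [hL]
  refine Measure.addHaar_submodule _ _ fun htop => ?_
  have : Pi.single i (1 : ℝ) ∈ LinearMap.ker L := htop ▸ Submodule.mem_top
  simp [L, hij.symm] at this

theorem ae_injective_volume {ι : Type*} [Fintype ι] : ∀ᵐ x : ι → ℝ, Injective x := by
  have hpair : ∀ i j : ι, ∀ᵐ x : ι → ℝ, x i = x j → i = j := fun i j => by
    by_cases hij : i = j
    · exact .of_forall fun _ _ => hij
    · filter_upwards [measure_eq_zero_iff_ae_notMem.1 (volume_setOf_apply_eq_apply hij)]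
        with x hx h using absurd h hx
  simpa only [Injective, ae_all_iff] using hpair

theorem measurePreserving_comp_perm {ι : Type*} [Fintype ι] (σ : Perm ι) :
    MeasurePreserving (fun x : ι → ℝ => x ∘ σ) :=
  volume_preserving_arrowCongr' σ.symm (MeasurableEquiv.refl ℝ) (MeasurePreserving.id _)

end MeasureTheory

namespace Tuple

variable {n : ℕ} {α : Type*} [LinearOrder α]

theorem antitone_comp_sort_toDual (x : Fin n → α) :
    Antitone (x ∘ sort (OrderDual.toDual ∘ x)) :=
  monotone_toDual_comp_iff.1 (monotone_sort _)

theorem perm_eq_of_antitone_comp {x : Fin n → α} (hx : Injective x) {σ τ : Perm (Fin n)}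
    (hσ : Antitone (x ∘ σ)) (hτ : Antitone (x ∘ τ)) : σ = τ := by
  have hsort : ∀ ρ : Perm (Fin n), Antitone (x ∘ ρ) → ρ = sort (OrderDual.toDual ∘ x) :=
    fun ρ hρ => eq_sort_iff.2
      ⟨monotone_toDual_comp_iff.2 hρ, fun i j hij h => absurd (ρ.injective (hx h)) hij.ne⟩
  rw [hsort σ hσ, hsort τ hτ]

end Tuple

namespace MeasureTheory

theorem setIntegral_eq_factorial_smul_setIntegral_antitone {n : ℕ} {E : Type*}
    [NormedAddCommGroup E] [NormedSpace ℝ E] {S : Set (Fin n → ℝ)} {F : (Fin n → ℝ) → E}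
    (hS : ∀ (σ : Perm (Fin n)) x, x ∘ σ ∈ S ↔ x ∈ S)
    (hF : ∀ (σ : Perm (Fin n)) x, F (x ∘ σ) = F x) (hFS : IntegrableOn F S) :
    ∫ x in S, F x = n ! • ∫ x in {x | Antitone x} ∩ S, F x := by
  let A : Perm (Fin n) → Set (Fin n → ℝ) := fun σ => {x | Antitone (x ∘ σ)}
  have hA : ∀ σ, MeasurableSet (A σ) := fun σ =>
    (isClosed_antitone.preimage (f := fun x : Fin n → ℝ => x ∘ σ) (by fun_prop)).measurableSet
  have hcover : ⋃ σ, A σ = Set.univ :=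
    Set.eq_univ_of_forall fun x => Set.mem_iUnion.2 ⟨_, Tuple.antitone_comp_sort_toDual x⟩
  have hdisj : Pairwise (AEDisjoint volume on A) := fun σ τ hστ =>
    measure_mono_null (fun x hx hinj => hστ (Tuple.perm_eq_of_antitone_comp hinj hx.1 hx.2))
      (ae_iff.1 ae_injective_volume)
  have hpiece : ∀ σ, ∫ x in A σ ∩ S, F x = ∫ x in {x | Antitone x} ∩ S, F x := fun σ => by
    have hpre : A σ ∩ S = (fun x => x ∘ σ) ⁻¹' ({x | Antitone x} ∩ S) := by
      ext x; simp [A, hS]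
    rw [hpre, ← (measurePreserving_comp_perm σ).setIntegral_preimage_emb
      (MeasurableEquiv.arrowCongr' σ.symm (MeasurableEquiv.refl ℝ)).measurableEmbedding F
      ({x | Antitone x} ∩ S)]
    simp_rw [hF]
  calc ∫ x in S, F x = ∫ x in ⋃ σ, A σ, F x ∂volume.restrict S := by
        rw [hcover, Measure.restrict_univ]
    _ = ∑ σ, ∫ x in A σ ∩ S, F x := by
        rw [integral_iUnion_ae (fun σ => (hA σ).nullMeasurableSet)
          (fun σ τ hστ => Measure.absolutelyContinuous_of_le Measure.restrict_le_self (hdisj hστ))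
          (by rwa [hcover, integrableOn_univ]), tsum_fintype]
        simp_rw [Measure.restrict_restrict (hA _)]
    _ = n ! • ∫ x in {x | Antitone x} ∩ S, F x := by
        rw [sum_congr rfl fun σ _ => hpiece σ, sum_const, Finset.card_univ, Fintype.card_perm,
          Fintype.card_fin]

theorem setIntegral_antitone_det_mul_det {n : ℕ} {K : Set ℝ} (hK : IsCompact K)
    (f g : Fin n → ℝ → ℝ) (hf : ∀ i, Continuous (f i)) (hg : ∀ i, Continuous (g i)) :
    ∫ x in {x | Antitone x} ∩ {x : Fin n → ℝ | ∀ i, x i ∈ K},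
        (Matrix.of fun i k => f i (x k)).det * (Matrix.of fun i k => g i (x k)).det
      = (Matrix.of fun i j => ∫ u in K, f i u * g j u).det := by
  have hcompact : IsCompact {x : Fin n → ℝ | ∀ i, x i ∈ K} := by
    simpa only [Set.pi, Set.mem_univ, true_imp_iff] using isCompact_univ_pi fun _ : Fin n => hK
  have hsymm := setIntegral_eq_factorial_smul_setIntegral_antitone
    (S := {x : Fin n → ℝ | ∀ i, x i ∈ K})
    (F := fun x => (Matrix.of fun i k => f i (x k)).det * (Matrix.of fun i k => g i (x k)).det)
    (fun σ x => σ.forall_congr_right (q := fun i => x i ∈ K))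
    (fun σ x => Matrix.det_of_comp_perm_mul_det_of_comp_perm f g x σ)
    ((by fun_prop : Continuous _).continuousOn.integrableOn_compact hcompact)
  rw [setIntegral_pi_det_mul_det K f g fun i j =>
    ((hf i).mul (hg j)).continuousOn.integrableOn_compact hK, Fintype.card_fin, nsmul_eq_mul]
    at hsymm
  exact (mul_right_inj' (cast_ne_zero.2 (factorial_ne_zero n))).1 hsymm.symm

end MeasureTheory

theorem setIntegral_Icc_pow_mul_exp_neg_eq_lowGamma_sub {a b : ℝ} (hab : a ≤ b) (s : ℕ) :
    ∫ u in Set.Icc a b, u ^ s * Real.exp (-u) = lowGamma (s + 1) b - lowGamma (s + 1) a := by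
  have hint : ∀ c : ℝ, IntervalIntegrable (fun u : ℝ => u ^ s * Real.exp (-u)) volume 0 c :=
    fun c => by apply Continuous.intervalIntegrable; fun_prop
  rw [lowGamma, lowGamma, add_tsub_cancel_right, intervalIntegral.integral_interval_sub_left
    (hint b) (hint a), intervalIntegral.integral_of_le hab, integral_Icc_eq_integral_Ioc]

theorem stmt_15_general {M n : ℕ} {a b : ℝ} (hab : a ≤ b) :
    (∫ x : Fin M → ℝ in
        {x | (∀ i j : Fin M, i ≤ j → x j ≤ x i) ∧ ∀ i : Fin M, x i ∈ Set.Icc a b},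
      (∏ i : Fin M, ∏ j ∈ Finset.Ioi i, (x i - x j) ^ 2) *
        ∏ i : Fin M, x i ^ (n - M) * Real.exp (-x i))
    = (Matrix.of fun i j : Fin M =>
        lowGamma (n - M + (i : ℕ) + (j : ℕ) + 1) b -
          lowGamma (n - M + (i : ℕ) + (j : ℕ) + 1) a).det := by
  set w : ℝ → ℝ := fun u => u ^ (n - M) * Real.exp (-u)
  calc _ = ∫ x in {x | Antitone x} ∩ {x : Fin M → ℝ | ∀ i, x i ∈ Set.Icc a b},
        (Matrix.of fun i k : Fin M => x k ^ (i : ℕ)).det *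
          (Matrix.of fun i k : Fin M => x k ^ (i : ℕ) * w (x k)).det := by
        congr 1
        funext x
        exact Matrix.prod_Ioi_sub_sq_mul_prod_eq_det_mul_det x w
    _ = (Matrix.of fun i j : Fin M =>
          ∫ u in Set.Icc a b, u ^ (i : ℕ) * (u ^ (j : ℕ) * w u)).det :=
        setIntegral_antitone_det_mul_det isCompact_Icc (fun i u => u ^ (i : ℕ))
          (fun i u => u ^ (i : ℕ) * w u) (fun _ => by fun_prop) (fun _ => by fun_prop)
    _ = _ := by
        congr 1
        ext i j
        rw [Matrix.of_apply, Matrix.of_apply,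
          ← setIntegral_Icc_pow_mul_exp_neg_eq_lowGamma_sub hab]
        congr 1
        funext u
        ring

/-- Probability that all eigenvalues of a complex central uncorrelated Wishart
matrix lie in `[a,b]` (up to the normalizing constant): the integral of the
squared Vandermonde determinant times `Π_i x_i^{n-M} e^{-x_i}` over the ordered
region `b ≥ x_1 ≥ ⋯ ≥ x_M ≥ a` equals `det B` with
`b_{i,j} = γ(n-M+i+j-1, b) - γ(n-M+i+j-1, a)` (`i, j` one-indexed). -/
theorem stmt_15 {M n : ℕ} (hM : 1 ≤ M) (hMn : M ≤ n) {a b : ℝ}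
    (ha : 0 ≤ a) (hab : a ≤ b) :
    (∫ x : Fin M → ℝ in
        {x | (∀ i j : Fin M, i ≤ j → x j ≤ x i) ∧ ∀ i : Fin M, x i ∈ Set.Icc a b},
      (∏ i : Fin M, ∏ j ∈ Finset.Ioi i, (x i - x j) ^ 2) *
        ∏ i : Fin M, x i ^ (n - M) * Real.exp (-x i))
    = (Matrix.of fun i j : Fin M =>
        lowGamma (n - M + (i : ℕ) + (j : ℕ) + 1) b -
          lowGamma (n - M + (i : ℕ) + (j : ℕ) + 1) a).det :=
  stmt_15_general hab
end
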